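/- arXiv:1801.09798 — 6 statements merged into one kernel-verified Lean document; each statement's English description precedes it below -/
import Mathlib

section
/- Let Σ be a finite alphabet, ε ∈ (0,1), 2 ≤ q ≤ n, and let P be a nonempty property of Σ-edge-colored ordered graphs on n vertices. Suppose there is a set A of Σ-edge-colored ordered graphs on q vertices such that Σ_{H∈A} t(H,G) ≥ 2/3 for every G ∈ P and Σ_{H∈A} t(H,G) ≤ 1/3 for every G that is ε-far from P. Then for every G ∈ P and every G' with d_e(G,G') ≤ 1/(20·C(q,2)), G' is ε-close to P. -/
/-!
`∑ H ∈ A, t(H,G)` is the fraction of `q`-sets of vertices on which the canonical tester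
accepts `G`. Swapping two adjacent vertices `x, x+1` preserves the vertex order on every set
not containing both of them, so it carries each accepted `q`-set avoiding the pair `{x, x+1}`
to an accepted `q`-set of the relabelled graph. A basic move therefore loses at most
`C(n-2,q-2)` accepted sets, i.e. at most `C(q,2)/C(n,2)` of acceptance density, and
`m ≤ C(n,2)/(20 C(q,2))` moves lose at most `1/20`. So `G'` is still accepted with density
`≥ 2/3 - 1/20 > 1/3`, which is impossible if `G'` is `ε`-far from `P`.
-/

/-- The set of (ordered) edges of `[n]`: pairs `(i,j)` with `i < j`. -/
abbrev Edge (n : ℕ) := {p : Fin n × Fin n // p.1 < p.2}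

/-- A `α`-edge-colored ordered graph on `n` vertices. -/
abbrev OGraph (n : ℕ) (α : Type) := Edge n → α

/-- The edge `{i,j}` for `i ≠ j`. -/
def mkEdge {n : ℕ} (i j : Fin n) (h : i ≠ j) : Edge n :=
  if hlt : i < j then ⟨(i, j), hlt⟩ else ⟨(j, i), lt_of_le_of_ne (not_lt.mp hlt) h.symm⟩

/-- `σ` is an adjacent transposition: it swaps some `x` and `x+1` and fixes the rest. -/
def IsAdjSwap {n : ℕ} (σ : Equiv.Perm (Fin n)) : Prop :=
  ∃ (x : Fin n) (h : x.val + 1 < n), σ = Equiv.swap x ⟨x.val + 1, h⟩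

/-- Relabeling a graph by a permutation: `(relabel σ G)({i,j}) = G({σ i, σ j})`.
For `σ` an adjacent transposition this is the basic move at `σ`. -/
def relabel {n : ℕ} {α : Type} (σ : Equiv.Perm (Fin n)) (G : OGraph n α) : OGraph n α :=
  fun e => G (mkEdge (σ e.1.1) (σ e.1.2) (fun hEq => (ne_of_lt e.2) (σ.injective hEq)))

/-- `H` is obtained from `G` by exactly `m` basic moves. -/
def MovesTo {n : ℕ} {α : Type} (G H : OGraph n α) (m : ℕ) : Prop :=
  ∃ l : List (Equiv.Perm (Fin n)), l.length = m ∧ (∀ σ ∈ l, IsAdjSwap σ) ∧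
    H = l.foldl (fun g σ => relabel σ g) G

/-- Normalized Hamming distance between two ordered graphs. -/
noncomputable def dHam {n : ℕ} {α : Type} (G H : OGraph n α) : ℝ :=
  (Nat.card {e : Edge n // G e ≠ H e} : ℝ) / (n.choose 2)


/-- Pull back a graph along an order-embedding `Fin q ↪o Fin n`: the induced ordered
subgraph on the image of `f`. -/
def pull {q n : ℕ} {α : Type} (f : Fin q ↪o Fin n) (G : OGraph n α) : OGraph q α :=
  fun e => G ⟨(f e.1.1, f e.1.2), f.strictMono e.2⟩

/-- The `q`-element vertex subset `S` of `[n]` induces (an ordered copy of) `H` in `G`. -/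
def Induces {q n : ℕ} {α : Type} (G : OGraph n α) (S : Finset (Fin n)) (H : OGraph q α) : Prop :=
  ∃ h : S.card = q, pull (S.orderEmbOfFin h) G = H

/-- `t(H,G)`: the number of `q`-element vertex subsets of `[n]` whose induced ordered
subgraph in `G` is (isomorphic to) `H`, divided by `C(n,q)`. -/
noncomputable def tDens {q n : ℕ} {α : Type} (H : OGraph q α) (G : OGraph n α) : ℝ :=
  (Nat.card {S : Finset (Fin n) // Induces G S H} : ℝ) / (n.choose q)


theorem strictMonoOn_swap_of_covBy {β : Type*} [LinearOrder β] {a b : β} (hab : a ⋖ b)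
    {s : Set β} (hs : ¬(a ∈ s ∧ b ∈ s)) : StrictMonoOn (Equiv.swap a b) s := by
  intro x hx y hy hxy
  have hlt := hab.lt
  rw [Equiv.swap_apply_def, Equiv.swap_apply_def]
  split_ifs <;> subst_vars
  · exact absurd hxy (lt_irrefl _)
  · exact absurd ⟨hx, hy⟩ hs
  · exact (hab.ge_of_gt hxy).lt_of_ne (Ne.symm ‹_›)
  · exact absurd ⟨hy, hx⟩ hs
  · order
  · order
  · order
  · exact (hab.le_of_lt hxy).lt_of_ne ‹_›
  · exact hxy

open Finset

theorem Finset.card_filter_superset_le {ι : Type*} [Fintype ι] [DecidableEq ι]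
    (s : Finset ι) (q : ℕ) :
    #{t : Finset ι | s ⊆ t ∧ #t = q} ≤ (Fintype.card ι - #s).choose (q - #s) := by
  calc #{t : Finset ι | s ⊆ t ∧ #t = q}
      ≤ #((powersetCard (q - #s) sᶜ).image (· ∪ s)) := by
        refine card_le_card fun t ht => ?_
        obtain ⟨hst, rfl⟩ := (mem_filter.mp ht).2
        refine mem_image.mpr ⟨t \ s, mem_powersetCard.mpr ⟨?_, card_sdiff_of_subset hst⟩,
          sdiff_union_of_subset hst⟩
        exact sdiff_subset_sdiff (subset_univ t) le_rfl
    _ ≤ #(powersetCard (q - #s) sᶜ) := card_image_le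
    _ = (Fintype.card ι - #s).choose (q - #s) := by rw [card_powersetCard, card_compl]

section Counting

variable {n q : ℕ} {α : Type}

theorem Induces.unique {G : OGraph n α} {S : Finset (Fin n)} {H H' : OGraph q α}
    (h : Induces G S H) (h' : Induces G S H') : H = H' := by
  obtain ⟨_, rfl⟩ := h
  obtain ⟨_, rfl⟩ := h'
  rfl

theorem pull_relabel_swap_image {a b : Fin n} (hab : a ⋖ b) (G : OGraph n α)
    {S : Finset (Fin n)} (hS : ¬(a ∈ S ∧ b ∈ S)) (hSq : #S = q)
    (hTq : #(S.image (Equiv.swap a b)) = q) :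
    pull ((S.image (Equiv.swap a b)).orderEmbOfFin hTq) (relabel (Equiv.swap a b) G)
      = pull (S.orderEmbOfFin hSq) G := by
  have hmono : StrictMono (Equiv.swap a b ∘ S.orderEmbOfFin hSq) := fun i j hij =>
    strictMonoOn_swap_of_covBy hab hS (S.orderEmbOfFin_mem hSq i) (S.orderEmbOfFin_mem hSq j)
      ((S.orderEmbOfFin hSq).strictMono hij)
  have hembed := orderEmbOfFin_unique hTq
    (fun i => mem_image_of_mem (Equiv.swap a b) (S.orderEmbOfFin_mem hSq i)) hmono
  funext e
  simp only [pull, relabel, ← hembed, Equiv.swap_apply_self, mkEdge,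
    dif_pos ((S.orderEmbOfFin hSq).strictMono e.2)]

theorem Induces.image_swap {a b : Fin n} (hab : a ⋖ b) {G : OGraph n α} {S : Finset (Fin n)}
    {H : OGraph q α} (hS : ¬(a ∈ S ∧ b ∈ S)) (h : Induces G S H) :
    Induces (relabel (Equiv.swap a b) G) (S.image (Equiv.swap a b)) H := by
  obtain ⟨hSq, rfl⟩ := h
  have hTq : #(S.image (Equiv.swap a b)) = q := by
    rwa [card_image_of_injective _ (Equiv.injective _)]
  exact ⟨hTq, pull_relabel_swap_image hab G hS hSq hTq⟩

open Classical in
noncomputable def acceptingSets (A : Finset (OGraph q α)) (G : OGraph n α) :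
    Finset (Finset (Fin n)) :=
  {S | ∃ H ∈ A, Induces G S H}

theorem sum_tDens_eq (A : Finset (OGraph q α)) (G : OGraph n α) :
    ∑ H ∈ A, tDens H G = #(acceptingSets A G) / (n.choose q) := by
  classical
  set inducing : OGraph q α → Finset (Finset (Fin n)) := fun H => {S | Induces G S H}
  have hbiUnion : acceptingSets A G = A.biUnion inducing := by
    ext S
    simp [acceptingSets, inducing]
  have hdisj : (A : Set (OGraph q α)).PairwiseDisjoint inducing := by
    intro H _ H' _ hne
    simp only [Function.onFun, disjoint_left, inducing, mem_filter]
    exact fun S hH hH' => hne (hH.2.unique hH'.2)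
  simp only [tDens, ← sum_div, hbiUnion, card_biUnion hdisj, Nat.cast_sum,
    Nat.card_eq_fintype_card, Fintype.card_subtype, inducing]

theorem card_acceptingSets_le_relabel_swap (A : Finset (OGraph q α)) (G : OGraph n α)
    {a b : Fin n} (hab : a ⋖ b) :
    #(acceptingSets A G)
      ≤ #(acceptingSets A (relabel (Equiv.swap a b) G)) + (n - 2).choose (q - 2) := by
  classical
  have hboth : #{S ∈ acceptingSets A G | a ∈ S ∧ b ∈ S} ≤ (n - 2).choose (q - 2) :=
    calc #{S ∈ acceptingSets A G | a ∈ S ∧ b ∈ S}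
        ≤ #{S : Finset (Fin n) | {a, b} ⊆ S ∧ #S = q} := by
          refine card_le_card fun S hS => ?_
          obtain ⟨hS, haS, hbS⟩ := mem_filter.mp hS
          obtain ⟨H, -, hSq, -⟩ := (mem_filter.mp hS).2
          simp [insert_subset_iff, haS, hbS, hSq]
      _ ≤ (n - 2).choose (q - 2) := by
          simpa [card_pair hab.lt.ne] using card_filter_superset_le {a, b} q
  have hrest : #{S ∈ acceptingSets A G | ¬(a ∈ S ∧ b ∈ S)}
      ≤ #(acceptingSets A (relabel (Equiv.swap a b) G)) := by
    refine card_le_card_of_injOn (image (Equiv.swap a b)) (fun S hS => ?_)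
      (image_injective (Equiv.injective _)).injOn
    simp only [coe_filter, Set.mem_ofPred_eq, acceptingSets, mem_filter, mem_univ,
      true_and] at hS ⊢
    obtain ⟨⟨H, hH, hSH⟩, hS⟩ := hS
    exact ⟨H, hH, hSH.image_swap hab hS⟩
  have := card_filter_add_card_filter_not (s := acceptingSets A G) (fun S => a ∈ S ∧ b ∈ S)
  omega

theorem MovesTo.card_acceptingSets_le {G G' : OGraph n α} {m : ℕ} (h : MovesTo G G' m)
    (A : Finset (OGraph q α)) :
    #(acceptingSets A G) ≤ #(acceptingSets A G') + m * (n - 2).choose (q - 2) := by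
  obtain ⟨l, rfl, hl, rfl⟩ := h
  induction l generalizing G with
  | nil => simp
  | cons σ l ih =>
    obtain ⟨x, hx, rfl⟩ := hl σ List.mem_cons_self
    have hswap := card_acceptingSets_le_relabel_swap A G (a := x) (b := ⟨x + 1, hx⟩)
      (by simp [Fin.covBy_iff])
    have hrest := ih (G := relabel (Equiv.swap x ⟨x + 1, hx⟩) G)
      fun τ hτ => hl τ (List.mem_cons_of_mem _ hτ)
    rw [List.foldl_cons, List.length_cons, add_one_mul]
    omega

theorem choose_sub_two_div_choose (hq : 2 ≤ q) (hqn : q ≤ n) :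
    ((n - 2).choose (q - 2) : ℝ) / n.choose q = q.choose 2 / n.choose 2 := by
  rw [div_eq_div_iff (by exact_mod_cast (Nat.choose_pos hqn).ne')
    (by exact_mod_cast (Nat.choose_pos (hq.trans hqn)).ne')]
  exact_mod_cast by linarith [Nat.choose_mul (n := n) hq]

theorem MovesTo.sum_tDens_le (hq : 2 ≤ q) (hqn : q ≤ n) {G G' : OGraph n α} {m : ℕ}
    (h : MovesTo G G' m) (A : Finset (OGraph q α)) :
    ∑ H ∈ A, tDens H G ≤ ∑ H ∈ A, tDens H G' + m * (q.choose 2 / n.choose 2) := by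
  rw [sum_tDens_eq, sum_tDens_eq, ← choose_sub_two_div_choose hq hqn]
  calc (#(acceptingSets A G) : ℝ) / n.choose q
      ≤ (#(acceptingSets A G') + m * (n - 2).choose (q - 2) : ℕ) / n.choose q := by
        gcongr
        exact h.card_acceptingSets_le A
    _ = _ := by push_cast; ring

end Counting

theorem stmt4_general {q n : ℕ} (hq : 2 ≤ q) (hqn : q ≤ n) {α : Type}
    (ε : ℝ)
    (P : Set (OGraph n α))
    (A : Finset (OGraph q α))
    (hpos : ∀ G ∈ P, (2 : ℝ) / 3 ≤ ∑ H ∈ A, tDens H G)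
    (hneg : ∀ G : OGraph n α, (∀ G'' ∈ P, ε < dHam G G'') → ∑ H ∈ A, tDens H G ≤ 1 / 3)
    (G : OGraph n α) (hG : G ∈ P) (G' : OGraph n α)
    (hGG' : ∃ m : ℕ, MovesTo G G' m ∧
      (m : ℝ) / (n.choose 2) ≤ 1 / (20 * (q.choose 2 : ℝ))) :
    ∃ G'' ∈ P, dHam G' G'' ≤ ε := by
  obtain ⟨m, hmoves, hm⟩ := hGG'
  by_contra! hfar
  have hq2 : (0 : ℝ) < q.choose 2 := by exact_mod_cast Nat.choose_pos hq
  have hsmall : (m : ℝ) * (q.choose 2 / n.choose 2) ≤ 1 / 20 :=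
    calc (m : ℝ) * (q.choose 2 / n.choose 2) = m / n.choose 2 * q.choose 2 := by ring
      _ ≤ 1 / (20 * q.choose 2) * q.choose 2 := by gcongr
      _ = 1 / 20 := by field_simp
  linarith [hpos G hG, hneg G' hfar, hmoves.sum_tDens_le hq hqn A]

/-- If `A` witnesses a canonical test for `P` (acceptance density `≥ 2/3` on `P`,
`≤ 1/3` on graphs `ε`-far from `P`), then for `G ∈ P` and any `G'` at normalized
earthmover distance at most `1/(20·C(q,2))` from `G`, `G'` is `ε`-close to `P`. -/
theorem stmt4 {q n : ℕ} (hq : 2 ≤ q) (hqn : q ≤ n) {α : Type} [Fintype α]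
    (ε : ℝ) (hε0 : 0 < ε) (hε1 : ε < 1)
    (P : Set (OGraph n α)) (hP : P.Nonempty)
    (A : Finset (OGraph q α))
    (hpos : ∀ G ∈ P, (2 : ℝ) / 3 ≤ ∑ H ∈ A, tDens H G)
    (hneg : ∀ G : OGraph n α, (∀ G'' ∈ P, ε < dHam G G'') → ∑ H ∈ A, tDens H G ≤ 1 / 3)
    (G : OGraph n α) (hG : G ∈ P) (G' : OGraph n α)
    (hGG' : ∃ m : ℕ, MovesTo G G' m ∧
      (m : ℝ) / (n.choose 2) ≤ 1 / (20 * (q.choose 2 : ℝ))) :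
    ∃ G'' ∈ P, dHam G' G'' ≤ ε :=
  stmt4_general hq hqn ε P A hpos hneg G hG G' hGG'
end

section
/- Let Σ be a finite alphabet and let 2 ≤ q ≤ k ≤ n. For every Σ-edge-colored ordered graph G on n vertices, the variation distance between the q-statistic of G and the (q,k)-statistic of G is at most q²/(2k); that is, (1/2)·Σ_H |t(H,G) − t_k(H,G)| ≤ q²/(2k), where the sum ranges over all Σ-edge-colored ordered graphs H on q vertices. -/
set_option maxHeartbeats 1600000


/-- The index (zero-based, in `[k]`) of the interval of the `k`-interval equipartition of `[n]`
containing the vertex `x`; earlier intervals are at least as large. -/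
def intervalIdx (n k : ℕ) (x : Fin n) : ℕ := x.val * k / n

/-- A vertex subset is `k`-separated if no two of its elements lie in the same interval
of the `k`-interval equipartition of `[n]`. -/
def KSep (n k : ℕ) (S : Finset (Fin n)) : Prop :=
  ∀ x ∈ S, ∀ y ∈ S, x ≠ y → intervalIdx n k x ≠ intervalIdx n k y

/-- `t_k(H,G)`: the number of `k`-separated `q`-subsets inducing an ordered copy of `H` in `G`,
divided by the total number `N(k,q,n)` of `k`-separated `q`-subsets of `[n]`. -/
noncomputable def tkDens {q n : ℕ} (k : ℕ) {α : Type} (H : OGraph q α) (G : OGraph n α) : ℝ :=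
  (Nat.card {S : Finset (Fin n) // KSep n k S ∧ Induces G S H} : ℝ) /
    (Nat.card {S : Finset (Fin n) // S.card = q ∧ KSep n k S} : ℝ)


section AuxStmt6
open Finset
open scoped Classical
variable {n k q : ℕ} {α : Type}

lemma aux_natCard_eq_filter {β : Type*} [Fintype β] (p : β → Prop) [DecidablePred p] :
    Nat.card {x // p x} = (univ.filter p).card := by
  rw [Nat.card_eq_fintype_card, Fintype.card_subtype]

lemma aux_lt_div (hn : 0 < n) (a : ℕ) : a < (a / n + 1) * n := by
  have h3 := Nat.div_add_mod a n
  have h4 := Nat.mod_lt a hn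
  have h5 : (a/n+1)*n = n*(a/n) + n := by ring
  omega

lemma same_idx_dist (hn : 0 < n) (hk : 0 < k) {x y : Fin n}
    (hxy : x.val ≤ y.val) (h : intervalIdx n k x = intervalIdx n k y) :
    y.val - x.val ≤ (n-1)/k := by
  rw [Nat.le_div_iff_mul_le hk, Nat.sub_mul]
  have h1 : (x.val * k) / n * n ≤ x.val * k := Nat.div_mul_le_self _ _
  have h2 : y.val * k < ((y.val * k) / n + 1) * n := aux_lt_div hn _
  unfold intervalIdx at h
  rw [← h] at h2
  have h5 : ((x.val * k) / n + 1) * n = (x.val * k) / n * n + n := by ring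
  omega

lemma fiber_card_le (hn : 0 < n) (hk : 0 < k) (i : ℕ) :
    ((univ : Finset (Fin n)).filter (fun y => intervalIdx n k y = i)).card ≤ (n-1)/k + 1 := by
  set d := (n-1)/k with hd
  set F := (univ : Finset (Fin n)).filter (fun y => intervalIdx n k y = i) with hF
  rcases F.eq_empty_or_nonempty with h | h
  · simp [h]
  · have hmF : F.min' h ∈ F := F.min'_mem h
    set m := F.min' h with hm
    calc F.card = (F.image Fin.val).card :=
          (Finset.card_image_of_injective _ Fin.val_injective).symm
      _ ≤ (Finset.Icc m.val (m.val + d)).card := by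
          apply Finset.card_le_card
          intro v hv
          simp only [Finset.mem_image] at hv
          obtain ⟨y, hy, rfl⟩ := hv
          have h1 : m ≤ y := F.min'_le y hy
          have h2 : intervalIdx n k y = intervalIdx n k m := by
            simp only [hF, Finset.mem_filter] at hy hmF
            rw [hy.2, hmF.2]
          have := same_idx_dist hn hk (x := m) (y := y) h1 h2.symm
          simp only [Finset.mem_Icc]
          omega
      _ ≤ d + 1 := by simp [Nat.card_Icc]; omega

lemma tord_card (hn : 0 < n) (hk : 0 < k) :
    ((univ : Finset (Fin n × Fin n)).filter
      (fun p => p.1 ≠ p.2 ∧ intervalIdx n k p.1 = intervalIdx n k p.2)).card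
      ≤ n * ((n-1)/k) := by
  set T := (univ : Finset (Fin n × Fin n)).filter
      (fun p => p.1 ≠ p.2 ∧ intervalIdx n k p.1 = intervalIdx n k p.2) with hT
  rw [Finset.card_eq_sum_card_fiberwise (f := Prod.fst) (t := univ) (fun x _ => mem_univ _)]
  have hx : ∀ x : Fin n, (T.filter (fun p => p.1 = x)).card ≤ (n-1)/k := by
    intro x
    have hsub : (T.filter (fun p => p.1 = x)).card ≤
        (((univ : Finset (Fin n)).filter
          (fun y => intervalIdx n k y = intervalIdx n k x)).erase x).card := by
      apply Finset.card_le_card_of_injOn (fun p => p.2)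
      · intro p hp
        simp only [Finset.mem_coe, hT, Finset.mem_filter, Finset.mem_univ, true_and, Finset.mem_erase] at hp ⊢
        obtain ⟨⟨hne, hidx⟩, h1⟩ := hp
        subst h1
        exact ⟨fun he => hne he.symm, hidx.symm⟩
      · intro p hp p' hp' hpp
        simp only [hT, Finset.coe_filter, Set.mem_setOf_eq] at hp hp'
        exact Prod.ext (hp.2.trans hp'.2.symm) hpp
    have hmem : x ∈ (univ : Finset (Fin n)).filter
        (fun y => intervalIdx n k y = intervalIdx n k x) := by simp
    rw [Finset.card_erase_of_mem hmem] at hsub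
    have := fiber_card_le hn hk (intervalIdx n k x) (n := n) (k := k)
    generalize hd : (n-1)/k = d at this ⊢
    omega
  calc ∑ x : Fin n, (T.filter (fun p => p.1 = x)).card ≤ ∑ _x : Fin n, (n-1)/k :=
        Finset.sum_le_sum (fun x _ => hx x)
    _ = n * ((n-1)/k) := by simp [mul_comm]

lemma tlt_card (hn : 0 < n) (hk : 0 < k) :
    2 * ((univ : Finset (Fin n × Fin n)).filter
      (fun p => p.1 < p.2 ∧ intervalIdx n k p.1 = intervalIdx n k p.2)).card
      ≤ n * ((n-1)/k) := by
  set Tlt := (univ : Finset (Fin n × Fin n)).filter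
      (fun p => p.1 < p.2 ∧ intervalIdx n k p.1 = intervalIdx n k p.2) with hTlt
  set Tgt := (univ : Finset (Fin n × Fin n)).filter
      (fun p => p.2 < p.1 ∧ intervalIdx n k p.1 = intervalIdx n k p.2) with hTgt
  have hcard : Tgt.card = Tlt.card := by
    rw [show Tgt = Tlt.image Prod.swap by
      ext p
      simp only [hTlt, hTgt, Finset.mem_image, Finset.mem_filter, Finset.mem_univ, true_and]
      constructor
      · rintro ⟨h1, h2⟩
        exact ⟨p.swap, ⟨h1, h2.symm⟩, Prod.swap_swap p⟩
      · rintro ⟨q, ⟨h1, h2⟩, rfl⟩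
        exact ⟨h1, h2.symm⟩]
    exact Finset.card_image_of_injective _ Prod.swap_injective
  have hunion : ((univ : Finset (Fin n × Fin n)).filter
      (fun p => p.1 ≠ p.2 ∧ intervalIdx n k p.1 = intervalIdx n k p.2)) = Tlt ∪ Tgt := by
    ext p
    simp only [hTlt, hTgt, Finset.mem_union, Finset.mem_filter, Finset.mem_univ, true_and]
    constructor
    · rintro ⟨h1, h2⟩
      rcases lt_or_gt_of_ne h1 with h | h
      · exact Or.inl ⟨h, h2⟩
      · exact Or.inr ⟨h, h2⟩
    · rintro (⟨h1, h2⟩ | ⟨h1, h2⟩)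
      · exact ⟨ne_of_lt h1, h2⟩
      · exact ⟨(ne_of_lt h1).symm, h2⟩
  have hdisj : Disjoint Tlt Tgt := by
    rw [Finset.disjoint_left]
    intro p hp hp'
    simp only [hTlt, hTgt, Finset.mem_filter] at hp hp'
    exact absurd hp'.2.1 (not_lt_of_gt hp.2.1)
  have := tord_card hn hk (n := n) (k := k)
  rw [hunion, Finset.card_union_of_disjoint hdisj, hcard] at this
  generalize hd : (n-1)/k = d at this ⊢
  omega

lemma exists_pair_of_not_ksep {S : Finset (Fin n)} (h : ¬ KSep n k S) :
    ∃ p : Fin n × Fin n, p.1 ∈ S ∧ p.2 ∈ S ∧ p.1 < p.2 ∧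
      intervalIdx n k p.1 = intervalIdx n k p.2 := by
  unfold KSep at h
  push_neg at h
  obtain ⟨x, hx, y, hy, hne, hidx⟩ := h
  rcases lt_or_gt_of_ne hne with hlt | hgt
  · exact ⟨(x, y), hx, hy, hlt, hidx⟩
  · exact ⟨(y, x), hy, hx, hgt, hidx.symm⟩

noncomputable def badPair (n k : ℕ) (hn : 0 < n) (S : Finset (Fin n)) : Fin n × Fin n :=
  if h : ∃ p : Fin n × Fin n, p.1 ∈ S ∧ p.2 ∈ S ∧ p.1 < p.2 ∧
      intervalIdx n k p.1 = intervalIdx n k p.2 then h.choose else (⟨0, hn⟩, ⟨0, hn⟩)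

lemma badPair_spec (hn : 0 < n) {S : Finset (Fin n)} (h : ¬ KSep n k S) :
    (badPair n k hn S).1 ∈ S ∧ (badPair n k hn S).2 ∈ S ∧
      (badPair n k hn S).1 < (badPair n k hn S).2 ∧
      intervalIdx n k (badPair n k hn S).1 = intervalIdx n k (badPair n k hn S).2 := by
  have hex := exists_pair_of_not_ksep h
  rw [badPair, dif_pos hex]
  exact hex.choose_spec

lemma nonsep_card (hq : 2 ≤ q) (hn : 0 < n) :
    ((univ : Finset (Finset (Fin n))).filter
      (fun S : Finset (Fin n) => S.card = q ∧ ¬ KSep n k S)).card ≤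
      ((univ : Finset (Fin n × Fin n)).filter
        (fun p => p.1 < p.2 ∧ intervalIdx n k p.1 = intervalIdx n k p.2)).card
        * (n-2).choose (q-2) := by
  classical
  set T := ((univ : Finset (Fin n × Fin n)).filter
        (fun p => p.1 < p.2 ∧ intervalIdx n k p.1 = intervalIdx n k p.2)) with hT
  set Sig := T.sigma (fun p => ((univ.erase p.1).erase p.2).powersetCard (q-2)) with hSig
  have hcard : Sig.card = T.card * (n-2).choose (q-2) := by
    rw [hSig, Finset.card_sigma]
    rw [Finset.sum_congr rfl (fun p hp => ?_), Finset.sum_const, smul_eq_mul]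
    rw [Finset.card_powersetCard]
    congr 2
    simp only [hT, Finset.mem_filter, Finset.mem_univ, true_and] at hp
    have hp2 : p.2 ∈ univ.erase p.1 :=
      Finset.mem_erase.2 ⟨(ne_of_lt hp.1).symm, Finset.mem_univ _⟩
    rw [Finset.card_erase_of_mem hp2, Finset.card_erase_of_mem (Finset.mem_univ _),
      Finset.card_univ, Fintype.card_fin]
    omega
  rw [← hcard]
  apply Finset.card_le_card_of_injOn
    (fun S => ⟨badPair n k hn S, S \ {(badPair n k hn S).1, (badPair n k hn S).2}⟩)
  · intro S hS
    simp only [Finset.mem_coe, Finset.mem_filter, Finset.mem_univ, true_and] at hS ⊢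
    obtain ⟨hScard, hSns⟩ := hS
    obtain ⟨h1, h2, h3, h4⟩ := badPair_spec hn hSns
    set p := badPair n k hn S
    rw [hSig, Finset.mem_sigma]
    constructor
    · simp only [hT, Finset.mem_filter, Finset.mem_univ, true_and]
      exact ⟨h3, h4⟩
    · rw [Finset.mem_powersetCard]
      constructor
      · intro x hx
        simp only [Finset.mem_sdiff, Finset.mem_insert, Finset.mem_singleton] at hx
        push_neg at hx
        exact Finset.mem_erase.2 ⟨hx.2.2, Finset.mem_erase.2 ⟨hx.2.1, Finset.mem_univ _⟩⟩
      · rw [Finset.card_sdiff_of_subset]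
        · rw [hScard]
          congr 1
          rw [Finset.card_insert_of_notMem, Finset.card_singleton]
          simp only [Finset.mem_singleton]
          exact ne_of_lt h3
        · intro x hx
          simp only [Finset.mem_insert, Finset.mem_singleton] at hx
          rcases hx with rfl | rfl
          · exact h1
          · exact h2
  · intro S hS S' hS' hEq
    simp only [Finset.coe_filter, Set.mem_setOf_eq, Finset.mem_univ, true_and] at hS hS'
    obtain ⟨h1, h2, h3, h4⟩ := badPair_spec hn hS.2
    obtain ⟨h1', h2', h3', h4'⟩ := badPair_spec hn hS'.2
    have hp : badPair n k hn S = badPair n k hn S' := congrArg Sigma.fst hEq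
    have hsd : S \ {(badPair n k hn S).1, (badPair n k hn S).2}
        = S' \ {(badPair n k hn S').1, (badPair n k hn S').2} := by
      have := congrArg Sigma.snd hEq
      simpa using this
    have hsub : ({(badPair n k hn S).1, (badPair n k hn S).2} : Finset (Fin n)) ⊆ S := by
      intro x hx
      simp only [Finset.mem_insert, Finset.mem_singleton] at hx
      rcases hx with rfl | rfl
      · exact h1
      · exact h2
    have hsub' : ({(badPair n k hn S').1, (badPair n k hn S').2} : Finset (Fin n)) ⊆ S' := by
      intro x hx
      simp only [Finset.mem_insert, Finset.mem_singleton] at hx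
      rcases hx with rfl | rfl
      · exact h1'
      · exact h2'
    calc S = S \ {(badPair n k hn S).1, (badPair n k hn S).2}
            ∪ {(badPair n k hn S).1, (badPair n k hn S).2} :=
          (Finset.sdiff_union_of_subset hsub).symm
      _ = S' \ {(badPair n k hn S').1, (badPair n k hn S').2}
            ∪ {(badPair n k hn S').1, (badPair n k hn S').2} := by rw [hsd, hp]
      _ = S' := Finset.sdiff_union_of_subset hsub'

lemma exists_ksep (hq0 : 0 < q) (hqk : q ≤ k) (hkn : k ≤ n) :
    ∃ S : Finset (Fin n), S.card = q ∧ KSep n k S := by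
  have hn : 0 < n := lt_of_lt_of_le (lt_of_lt_of_le hq0 hqk) hkn
  have hk : 0 < k := lt_of_lt_of_le hq0 hqk
  have hbd : ∀ i : Fin q, (i.val * n + (k - 1)) / k < n := by
    intro i
    apply Nat.div_lt_of_lt_mul
    have h1 : i.val ≤ k - 1 := by omega
    have h2 : i.val * n ≤ (k-1) * n := Nat.mul_le_mul_right n h1
    have h3 : (k-1)*n + n = k * n := by cases k with
      | zero => omega
      | succ m => simp [Nat.succ_sub_one]; ring
    have h4 : k - 1 < n := by omega
    omega
  set f : Fin q → Fin n := fun i => ⟨(i.val * n + (k - 1)) / k, hbd i⟩ with hf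
  have hidx : ∀ i : Fin q, intervalIdx n k (f i) = i.val := by
    intro i
    unfold intervalIdx
    simp only [hf]
    apply Nat.div_eq_of_lt_le
    · have h1 := Nat.div_add_mod (i.val * n + (k - 1)) k
      have h2 := Nat.mod_lt (i.val * n + (k - 1)) hk
      have h3 : ((i.val * n + (k-1))/k) * k = k * ((i.val * n + (k-1))/k) := by ring
      omega
    · have h1 : ((i.val * n + (k-1))/k) * k ≤ i.val * n + (k-1) := Nat.div_mul_le_self _ _
      have h2 : (i.val + 1) * n = i.val * n + n := by ring
      omega
  have hinj : Function.Injective f := by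
    intro i j hij
    have : (i : ℕ) = (j : ℕ) := by rw [← hidx i, ← hidx j, hij]
    exact Fin.ext this
  refine ⟨Finset.image f univ, ?_, ?_⟩
  · rw [Finset.card_image_of_injective _ hinj, Finset.card_univ, Fintype.card_fin]
  · intro x hx y hy hne
    simp only [Finset.mem_image, Finset.mem_univ, true_and] at hx hy
    obtain ⟨i, rfl⟩ := hx
    obtain ⟨j, rfl⟩ := hy
    rw [hidx i, hidx j]
    intro hc
    exact hne (congrArg f (Fin.ext hc))

noncomputable def indOf (q : ℕ) [Inhabited α] (G : OGraph n α) (S : Finset (Fin n)) :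
    OGraph q α :=
  if h : S.card = q then pull (S.orderEmbOfFin h) G else default

lemma induces_iff [Inhabited α] (G : OGraph n α) (S : Finset (Fin n)) (H : OGraph q α) :
    Induces G S H ↔ (S.card = q ∧ indOf q G S = H) := by
  constructor
  · rintro ⟨h, hp⟩
    exact ⟨h, by rw [indOf, dif_pos h]; exact hp⟩
  · rintro ⟨h, hp⟩
    exact ⟨h, by rw [indOf, dif_pos h] at hp; exact hp⟩

lemma sum_filter_induces [Inhabited α] [Fintype α] (G : OGraph n α)
    (P : Finset (Fin n) → Prop) :
    ∑ H : OGraph q α,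
      ((univ : Finset (Finset (Fin n))).filter (fun S => P S ∧ Induces G S H)).card
    = ((univ : Finset (Finset (Fin n))).filter (fun S => P S ∧ S.card = q)).card := by
  rw [Finset.card_eq_sum_card_fiberwise (f := indOf q G) (t := univ)
    (fun x _ => mem_univ _)]
  apply Finset.sum_congr rfl
  intro H _
  congr 1
  ext S
  simp only [Finset.mem_filter, Finset.mem_univ, true_and, induces_iff]
  tauto

lemma choose_identity (hq : 2 ≤ q) (hqn : q ≤ n) :
    q * (q-1) * (n.choose q) = n * (n-1) * ((n-2).choose (q-2)) := by
  obtain ⟨q', rfl⟩ : ∃ q', q = q' + 2 := ⟨q-2, by omega⟩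
  obtain ⟨n', rfl⟩ : ∃ n', n = n' + 2 := ⟨n-2, by omega⟩
  have e1 : q' + 2 - 1 = q' + 1 := by omega
  have e2 : n' + 2 - 1 = n' + 1 := by omega
  have e3 : q' + 2 - 2 = q' := by omega
  have e4 : n' + 2 - 2 = n' := by omega
  rw [e1, e2, e3, e4]
  have h1 := Nat.add_one_mul_choose_eq (n'+1) (q'+1)
  have h2 := Nat.add_one_mul_choose_eq n' q'
  calc (q'+2)*(q'+1)*((n'+2).choose (q'+2))
      = (q'+1)*(((n'+2).choose (q'+2))*(q'+2)) := by ring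
    _ = (q'+1)*((n'+2)*((n'+1).choose (q'+1))) := by rw [← h1]
    _ = (n'+2)*(((n'+1).choose (q'+1))*(q'+1)) := by ring
    _ = (n'+2)*((n'+1)*(n'.choose q')) := by rw [← h2]
    _ = (n'+2)*(n'+1)*(n'.choose q') := by ring

end AuxStmt6

/-- The variation distance between the `q`-statistic and the `(q,k)`-statistic of `G`
is at most `q²/(2k)`. -/
theorem stmt6 {q k n : ℕ} (hq : 2 ≤ q) (hqk : q ≤ k) (hkn : k ≤ n)
    {α : Type} [Fintype α] (G : OGraph n α) :
    (1 / 2 : ℝ) * ∑ H : OGraph q α, |tDens H G - tkDens k H G| ≤ (q : ℝ) ^ 2 / (2 * k) := by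
  classical
  have hk0 : 0 < k := by omega
  have hn0 : 0 < n := by omega
  have hqn : q ≤ n := le_trans hqk hkn
  have hInh : Inhabited α :=
    ⟨G ⟨(⟨0, by omega⟩, ⟨1, by omega⟩), by simp [Fin.lt_def]⟩⟩
  -- integer counts
  set a : OGraph q α → ℕ := fun H =>
    ((Finset.univ : Finset (Finset (Fin n))).filter (fun S => Induces G S H)).card with ha
  set b : OGraph q α → ℕ := fun H =>
    ((Finset.univ : Finset (Finset (Fin n))).filter (fun S => KSep n k S ∧ Induces G S H)).card with hb
  set Bn : ℕ :=
    ((Finset.univ : Finset (Finset (Fin n))).filter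
      (fun S : Finset (Fin n) => S.card = q ∧ KSep n k S)).card with hBn
  set NSn : ℕ :=
    ((Finset.univ : Finset (Finset (Fin n))).filter
      (fun S : Finset (Fin n) => S.card = q ∧ ¬ KSep n k S)).card with hNSn
  set Cn : ℕ := n.choose q with hCn
  -- the filter of q-sets
  have hQcard : ((Finset.univ : Finset (Finset (Fin n))).filter
      (fun S : Finset (Fin n) => S.card = q)).card = Cn := by
    rw [show ((Finset.univ : Finset (Finset (Fin n))).filter (fun S : Finset (Fin n) => S.card = q))
        = Finset.powersetCard q (Finset.univ : Finset (Fin n)) by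
      ext S; simp [Finset.mem_powersetCard_univ]]
    rw [Finset.card_powersetCard, Finset.card_univ, Fintype.card_fin]
  -- sum of a = Cn
  have hsa : ∑ H : OGraph q α, a H = Cn := by
    have h := sum_filter_induces (q := q) G (fun _ => True)
    simp only [true_and] at h
    rw [← hQcard]
    exact h
  -- sum of b = Bn
  have hsb : ∑ H : OGraph q α, b H = Bn := by
    have h := sum_filter_induces (q := q) G (KSep n k)
    rw [hb, hBn]
    rw [h]
    congr 1
    ext S
    simp only [Finset.mem_filter]
    tauto
  -- b ≤ a
  have hble : ∀ H : OGraph q α, b H ≤ a H := by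
    intro H
    apply Finset.card_le_card
    intro S hS
    simp only [Finset.mem_filter] at hS ⊢
    exact ⟨hS.1, hS.2.2⟩
  -- Bn + NSn = Cn
  have hsplit : Bn + NSn = Cn := by
    rw [← hQcard, hBn, hNSn]
    rw [show ((Finset.univ : Finset (Finset (Fin n))).filter
        (fun S : Finset (Fin n) => S.card = q ∧ KSep n k S))
        = ((Finset.univ : Finset (Finset (Fin n))).filter
            (fun S : Finset (Fin n) => S.card = q)).filter (fun S => KSep n k S) by
      rw [Finset.filter_filter]]
    rw [show ((Finset.univ : Finset (Finset (Fin n))).filter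
        (fun S : Finset (Fin n) => S.card = q ∧ ¬ KSep n k S))
        = ((Finset.univ : Finset (Finset (Fin n))).filter
            (fun S : Finset (Fin n) => S.card = q)).filter (fun S => ¬ KSep n k S) by
      rw [Finset.filter_filter]]
    exact Finset.card_filter_add_card_filter_not _
  have hBle : Bn ≤ Cn := by omega
  have hCpos : 0 < Cn := Nat.choose_pos hqn
  have hBpos : 0 < Bn := by
    obtain ⟨S, hS1, hS2⟩ := exists_ksep (by omega : 0 < q) hqk hkn
    rw [hBn]
    apply Finset.card_pos.2
    exact ⟨S, Finset.mem_filter.2 ⟨Finset.mem_univ _, hS1, hS2⟩⟩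
  -- key nat inequality
  have hkey : 2 * k * NSn ≤ q ^ 2 * Cn := by
    have h1 := nonsep_card (q := q) (n := n) (k := k) hq hn0
    have h2 := tlt_card (n := n) (k := k) hn0 hk0
    have h3 : ((n-1)/k) * k ≤ n-1 := Nat.div_mul_le_self _ _
    have h4 := choose_identity hq hqn
    set Tc := ((Finset.univ : Finset (Fin n × Fin n)).filter
        (fun p => p.1 < p.2 ∧ intervalIdx n k p.1 = intervalIdx n k p.2)).card with hTc
    set d := (n-1)/k with hd
    set ch2 := (n-2).choose (q-2) with hch2
    calc 2 * k * NSn ≤ 2 * k * (Tc * ch2) :=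
          Nat.mul_le_mul_left _ h1
      _ = k * (2 * Tc) * ch2 := by ring
      _ ≤ k * (n * d) * ch2 := Nat.mul_le_mul_right _ (Nat.mul_le_mul_left _ h2)
      _ = n * (d * k) * ch2 := by ring
      _ ≤ n * (n-1) * ch2 :=
          Nat.mul_le_mul_right _ (Nat.mul_le_mul_left _ h3)
      _ = q * (q-1) * Cn := h4.symm
      _ ≤ q ^ 2 * Cn := by
          apply Nat.mul_le_mul_right
          have : q * (q - 1) ≤ q * q := Nat.mul_le_mul_left _ (by omega)
          calc q * (q-1) ≤ q * q := this
            _ = q ^ 2 := (sq q).symm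
  -- move to the reals
  set C : ℝ := (Cn : ℝ) with hCr
  set B : ℝ := (Bn : ℝ) with hBr
  have hC : (0:ℝ) < C := by rw [hCr]; exact_mod_cast hCpos
  have hB : (0:ℝ) < B := by rw [hBr]; exact_mod_cast hBpos
  have hBCr : B ≤ C := by rw [hBr, hCr]; exact_mod_cast hBle
  have htD : ∀ H : OGraph q α, tDens H G = (a H : ℝ) / C := by
    intro H
    rw [tDens, aux_natCard_eq_filter, hCr, ha]
  have htk : ∀ H : OGraph q α, tkDens k H G = (b H : ℝ) / B := by
    intro H
    rw [tkDens, aux_natCard_eq_filter, aux_natCard_eq_filter, hBr, hb, hBn]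
  have hinv : (0:ℝ) ≤ 1/B - 1/C := by
    have := one_div_le_one_div_of_le hB hBCr
    linarith
  have hper : ∀ H : OGraph q α,
      |tDens H G - tkDens k H G| ≤ ((a H : ℝ) - b H)/C + (b H : ℝ)*(1/B - 1/C) := by
    intro H
    rw [htD, htk]
    have hab : (b H : ℝ) ≤ (a H : ℝ) := by exact_mod_cast hble H
    have h1 : (0:ℝ) ≤ ((a H : ℝ) - b H)/C := div_nonneg (by linarith) hC.le
    have h2 : (0:ℝ) ≤ (b H : ℝ)*(1/B - 1/C) := mul_nonneg (Nat.cast_nonneg _) hinv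
    have h3 : (a H : ℝ)/C - (b H : ℝ)/B
        = ((a H : ℝ) - b H)/C - (b H : ℝ)*(1/B - 1/C) := by
      field_simp
      ring
    rw [h3]
    calc |((a H : ℝ) - b H)/C - (b H : ℝ)*(1/B - 1/C)|
        ≤ |((a H : ℝ) - b H)/C| + |(b H : ℝ)*(1/B - 1/C)| := abs_sub _ _
      _ = ((a H : ℝ) - b H)/C + (b H : ℝ)*(1/B - 1/C) := by
          rw [abs_of_nonneg h1, abs_of_nonneg h2]
  have hsaR : ∑ H : OGraph q α, (a H : ℝ) = C := by
    rw [hCr, ← hsa]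
    exact (Nat.cast_sum _ _).symm
  have hsbR : ∑ H : OGraph q α, (b H : ℝ) = B := by
    rw [hBr, ← hsb]
    exact (Nat.cast_sum _ _).symm
  have hsum : ∑ H : OGraph q α, |tDens H G - tkDens k H G| ≤ 2 * ((C - B)/C) := by
    calc ∑ H : OGraph q α, |tDens H G - tkDens k H G|
        ≤ ∑ H : OGraph q α, (((a H : ℝ) - b H)/C + (b H : ℝ)*(1/B - 1/C)) :=
          Finset.sum_le_sum (fun H _ => hper H)
      _ = (∑ H : OGraph q α, ((a H : ℝ) - b H))/C
          + (∑ H : OGraph q α, (b H : ℝ))*(1/B - 1/C) := by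
          rw [Finset.sum_add_distrib, Finset.sum_div, ← Finset.sum_mul]
      _ = (C - B)/C + B*(1/B - 1/C) := by
          rw [Finset.sum_sub_distrib, hsaR, hsbR]
      _ = 2 * ((C - B)/C) := by
          field_simp
          ring
  have hfinal : (C - B)/C ≤ (q : ℝ)^2 / (2*k) := by
    rw [div_le_div_iff₀ hC (by positivity : (0:ℝ) < 2*(k:ℝ))]
    have hCB : C - B = (NSn : ℝ) := by
      rw [hCr, hBr, ← hsplit]
      push_cast
      ring
    rw [hCB]
    have := hkey
    have hcast : (2*k*NSn : ℝ) ≤ ((q:ℝ)^2 * Cn) := by exact_mod_cast hkey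
    rw [hCr]
    nlinarith [hcast]
  calc (1 / 2 : ℝ) * ∑ H : OGraph q α, |tDens H G - tkDens k H G|
      ≤ (1 / 2 : ℝ) * (2 * ((C - B)/C)) := by linarith [hsum]
    _ = (C - B)/C := by ring
    _ ≤ (q : ℝ)^2 / (2*k) := hfinal
end

section
/- There exists an absolute constant α > 0 such that the following holds for every real c ≥ 1 and every positive integer n: if P is a nonempty property of n×n black-white images such that every image in P has a c-sparse boundary (at most cn boundary pixels), then for every ε ∈ (0,1), every image I ∈ P, and every image I' obtained from I by at most (α·ε²/c²)·n² basic moves, I' is ε-close to P in normalized Hamming distance. -/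
/-!
After `m` basic moves, `I'` is `(i, j) ↦ I (σ i) (τ j)` for permutations `σ`, `τ` of total
displacement `∑ |σ i - i| + ∑ |τ j - j| ≤ 2m`. Put `D = ⌊√m⌋`. At most `2m / (D + 1)` rows and
columns move by more than `D`, and they cover at most `2mn / (D + 1)` pixels. At any other pixel
where `I` and `I'` differ, the colour changes along the path to its preimage (first along the
column, then along the row), so this path, whose two legs have length at most `D`, contains a
boundary pixel; each boundary pixel lies on at most `2(2D + 1)` such paths. Hence `I` and `I'` differ in
`O((1 + c) n √m)` pixels, which is at most `εn²` once `m ≤ ε²n² / (100c²)`.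
-/

/-- A basic move on an `n×n` image: swap two adjacent rows or two adjacent columns. -/
def ImgMove {n : ℕ} {α : Type} (I I' : Fin n → Fin n → α) : Prop :=
  ∃ (x : Fin n) (h : x.val + 1 < n),
    I' = (fun i j => I (Equiv.swap x ⟨x.val + 1, h⟩ i) j) ∨
    I' = (fun i j => I i (Equiv.swap x ⟨x.val + 1, h⟩ j))

/-- `MovesN R m a b`: `b` is obtained from `a` by exactly `m` `R`-steps. -/
def MovesN {β : Type} (R : β → β → Prop) : ℕ → β → β → Prop
  | 0 => fun a b => a = b
  | m + 1 => fun a c => ∃ b, R a b ∧ MovesN R m b c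

/-- Normalized Hamming distance between two `n×n` images. -/
noncomputable def dHamImg {n : ℕ} {α : Type} (I I' : Fin n → Fin n → α) : ℝ :=
  (Nat.card {p : Fin n × Fin n // I p.1 p.2 ≠ I' p.1 p.2} : ℝ) / (n ^ 2)

/-- Two pixels are neighbors if they agree in one coordinate and differ by exactly `1`
in the other. -/
def Nbr {n : ℕ} (P Q : Fin n × Fin n) : Prop :=
  (P.1 = Q.1 ∧ (P.2.val + 1 = Q.2.val ∨ Q.2.val + 1 = P.2.val)) ∨
  (P.2 = Q.2 ∧ (P.1.val + 1 = Q.1.val ∨ Q.1.val + 1 = P.1.val))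

/-- The boundary of a black-white image (`true` = black, `false` = white): the set of
black pixels having a white neighbor. -/
def boundary {n : ℕ} (I : Fin n → Fin n → Bool) : Set (Fin n × Fin n) :=
  {P | I P.1 P.2 = true ∧ ∃ Q, Nbr P Q ∧ I Q.1 Q.2 = false}


open Finset

section Displacement

variable {n : ℕ}

def displacement (σ : Equiv.Perm (Fin n)) : ℕ := ∑ i, Nat.dist (σ i) i

@[simp]
lemma displacement_one : displacement (1 : Equiv.Perm (Fin n)) = 0 := by
  simp [displacement]

lemma displacement_trans_le (σ π : Equiv.Perm (Fin n)) :
    displacement (σ.trans π) ≤ displacement σ + displacement π := by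
  calc displacement (σ.trans π)
      ≤ ∑ i, (Nat.dist (π (σ i)) (σ i) + Nat.dist (σ i) i) :=
        sum_le_sum fun i _ => Nat.dist.triangle_inequality _ _ _
    _ = displacement π + displacement σ := by
        rw [sum_add_distrib, Equiv.sum_comp σ fun j => Nat.dist (π j) j]; rfl
    _ = displacement σ + displacement π := add_comm _ _

lemma displacement_swap (x y : Fin n) :
    displacement (Equiv.swap x y) = 2 * Nat.dist x y := by
  rcases eq_or_ne x y with rfl | hxy
  · simp [displacement]
  rw [displacement, ← sum_subset (subset_univ _) fun i _ hi => by
      rw [Equiv.Perm.notMem_support.1 hi, Nat.dist_self],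
    Equiv.Perm.support_swap hxy, sum_pair hxy, Equiv.swap_apply_left,
    Equiv.swap_apply_right, Nat.dist_comm, two_mul]

end Displacement

lemma exists_perm_of_movesN {n : ℕ} {α : Type} {m : ℕ} {I I' : Fin n → Fin n → α}
    (h : MovesN ImgMove m I I') :
    ∃ σ τ : Equiv.Perm (Fin n), I' = (fun i j => I (σ i) (τ j)) ∧
      displacement σ + displacement τ ≤ 2 * m := by
  induction m generalizing I with
  | zero => exact ⟨1, 1, h.symm, by simp⟩
  | succ m ih =>
    obtain ⟨J, ⟨x, hx, hrow | hcol⟩, hJ⟩ := h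
    all_goals
      obtain ⟨σ, τ, rfl, hστ⟩ := ih hJ
      subst J
      have hswap : displacement (Equiv.swap x ⟨x + 1, hx⟩) = 2 := by
        rw [displacement_swap]; simp [Nat.dist]
    · refine ⟨σ.trans (Equiv.swap x ⟨x + 1, hx⟩), τ, rfl, ?_⟩
      linarith [displacement_trans_le σ (Equiv.swap x ⟨x + 1, hx⟩)]
    · refine ⟨σ, τ.trans (Equiv.swap x ⟨x + 1, hx⟩), rfl, ?_⟩
      linarith [displacement_trans_le τ (Equiv.swap x ⟨x + 1, hx⟩)]

lemma exists_ne_succ_of_ne {α : Type*} {f : ℕ → α} {a b : ℕ} (hab : a ≤ b) (h : f a ≠ f b) :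
    ∃ k, a ≤ k ∧ k < b ∧ f k ≠ f (k + 1) := by
  induction b, hab using Nat.le_induction with
  | base => exact absurd rfl h
  | succ b hab ih =>
    by_cases hb : f a = f b
    · exact ⟨b, hab, b.lt_succ_self, fun e => h (hb.trans e)⟩
    · obtain ⟨k, hak, hkb, hk⟩ := ih hb
      exact ⟨k, hak, hkb.trans b.lt_succ_self, hk⟩

section Boundary

variable {n : ℕ}

lemma Nbr.symm {P Q : Fin n × Fin n} (h : Nbr P Q) : Nbr Q P := by
  unfold Nbr at *; grind

lemma nbr_swap_iff {P Q : Fin n × Fin n} : Nbr P.swap Q.swap ↔ Nbr Q P := by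
  unfold Nbr; grind

lemma mem_boundary_or_mem_boundary_of_nbr {I : Fin n → Fin n → Bool} {P Q : Fin n × Fin n}
    (hPQ : Nbr P Q) (h : I P.1 P.2 ≠ I Q.1 Q.2) : P ∈ boundary I ∨ Q ∈ boundary I := by
  cases hP : I P.1 P.2
  · exact Or.inr ⟨by simpa [hP] using h.symm, P, hPQ.symm, hP⟩
  · exact Or.inl ⟨hP, Q, hPQ, by simpa [hP] using h.symm⟩

lemma mem_boundary_transpose_iff {I : Fin n → Fin n → Bool} {P : Fin n × Fin n} :
    P ∈ boundary (fun i j => I j i) ↔ P.swap ∈ boundary I := by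
  constructor
  · rintro ⟨hP, Q, hPQ, hQ⟩
    exact ⟨hP, Q.swap, nbr_swap_iff.2 hPQ.symm, hQ⟩
  · rintro ⟨hP, Q, hPQ, hQ⟩
    exact ⟨hP, Q.swap, (nbr_swap_iff.2 hPQ).symm, hQ⟩

lemma exists_mem_boundary_column_of_le (I : Fin n → Fin n → Bool) (j : Fin n) {a b : Fin n}
    (hab : a ≤ b) (h : I a j ≠ I b j) : ∃ r, a ≤ r ∧ r ≤ b ∧ (r, j) ∈ boundary I := by
  let f : ℕ → Bool := fun k => if hk : k < n then I ⟨k, hk⟩ j else I b j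
  obtain ⟨k, hak, hkb, hk⟩ :=
    exists_ne_succ_of_ne (f := f) (Fin.le_def.1 hab) (by simpa [f] using h)
  have hk1 : k + 1 < n := by omega
  have hnbr : Nbr (⟨k, by omega⟩, j) (⟨k + 1, hk1⟩, j) := Or.inr ⟨rfl, Or.inl rfl⟩
  rcases mem_boundary_or_mem_boundary_of_nbr hnbr (by simpa [f, hk1, show k < n by omega] using hk)
    with hP | hQ
  · exact ⟨_, Fin.le_def.2 hak, Fin.le_def.2 hkb.le, hP⟩
  · exact ⟨_, Fin.le_def.2 (by simp; omega), Fin.le_def.2 (Nat.succ_le_of_lt hkb), hQ⟩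

lemma exists_mem_boundary_column (I : Fin n → Fin n → Bool) (j a b : Fin n)
    (h : I a j ≠ I b j) : ∃ r : Fin n, Nat.dist r a ≤ Nat.dist b a ∧ (r, j) ∈ boundary I := by
  rcases le_total a b with hab | hab
  · obtain ⟨r, har, hrb, hr⟩ := exists_mem_boundary_column_of_le I j hab h
    exact ⟨r, by simp only [Fin.le_def] at har hrb; simp only [Nat.dist]; omega, hr⟩
  · obtain ⟨r, hbr, hra, hr⟩ := exists_mem_boundary_column_of_le I j hab h.symm
    exact ⟨r, by simp only [Fin.le_def] at hbr hra; simp only [Nat.dist]; omega, hr⟩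

lemma exists_mem_boundary_row (I : Fin n → Fin n → Bool) (i a b : Fin n)
    (h : I i a ≠ I i b) : ∃ r : Fin n, Nat.dist r a ≤ Nat.dist b a ∧ (i, r) ∈ boundary I :=
  let ⟨r, hr, hb⟩ := exists_mem_boundary_column (fun i j => I j i) i a b h
  ⟨r, hr, mem_boundary_transpose_iff.1 hb⟩

end Boundary

lemma card_filter_lt_mul_le_sum {ι : Type*} (s : Finset ι) (f : ι → ℕ) (D : ℕ) :
    #{i ∈ s | D < f i} * (D + 1) ≤ ∑ i ∈ s, f i :=
  calc #{i ∈ s | D < f i} * (D + 1) ≤ ∑ i ∈ s with D < f i, f i := by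
        simpa using card_nsmul_le_sum _ f (D + 1) fun i hi => (mem_filter.1 hi).2
    _ ≤ ∑ i ∈ s, f i := sum_le_sum_of_subset (filter_subset _ _)

lemma card_filter_dist_le {n : ℕ} (x : Fin n) (D : ℕ) :
    #{r : Fin n | Nat.dist r x ≤ D} ≤ 2 * D + 1 :=
  calc #{r : Fin n | Nat.dist r x ≤ D} ≤ #(Icc (x - D : ℕ) (x + D)) := by
        refine card_le_card_of_injOn (fun r => (r : ℕ)) (fun r hr => ?_) Fin.val_injective.injOn
        simp only [coe_filter, mem_univ, true_and, Set.mem_ofPred_eq, coe_Icc, Set.mem_Icc] at hr ⊢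
        unfold Nat.dist at hr
        omega
    _ ≤ 2 * D + 1 := by rw [Nat.card_Icc]; omega

section Counting

variable {n : ℕ} (I : Fin n → Fin n → Bool) (σ τ : Equiv.Perm (Fin n)) (D : ℕ)

lemma exists_mem_boundary_near_of_ne {p : Fin n × Fin n} (hp : I (σ p.1) (τ p.2) ≠ I p.1 p.2)
    (hσ : Nat.dist (σ p.1) p.1 ≤ D) (hτ : Nat.dist (τ p.2) p.2 ≤ D) :
    ∃ b ∈ boundary I,
      (Nat.dist p.1 b.1 ≤ D ∧ p.2 = b.2) ∨ (p.1 = σ.symm b.1 ∧ Nat.dist p.2 b.2 ≤ D) := by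
  by_cases hcol : I p.1 p.2 = I (σ p.1) p.2
  · obtain ⟨r, hr, hb⟩ := exists_mem_boundary_row I (σ p.1) p.2 (τ p.2) fun e => hp (hcol ▸ e).symm
    exact ⟨_, hb, Or.inr ⟨by simp, by dsimp only; rw [Nat.dist_comm]; omega⟩⟩
  · obtain ⟨r, hr, hb⟩ := exists_mem_boundary_column I p.2 p.1 (σ p.1) hcol
    exact ⟨_, hb, Or.inl ⟨by dsimp only; rw [Nat.dist_comm]; omega, rfl⟩⟩

lemma card_ne_comp_perm_mul_le :
    #{p : Fin n × Fin n | I (σ p.1) (τ p.2) ≠ I p.1 p.2} * (D + 1) ≤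
      (displacement σ + displacement τ) * n + (boundary I).ncard * (4 * D + 2) * (D + 1) := by
  classical
  set farR := ({i | D < Nat.dist (σ i) i} : Finset (Fin n))
  set farC := ({j | D < Nat.dist (τ j) j} : Finset (Fin n))
  set W : Fin n → Finset (Fin n) := fun x => {r | Nat.dist r x ≤ D}
  set near : Fin n × Fin n → Finset (Fin n × Fin n) :=
    fun b => W b.1 ×ˢ {b.2} ∪ {σ.symm b.1} ×ˢ W b.2
  have hcover : ({p | I (σ p.1) (τ p.2) ≠ I p.1 p.2} : Finset (Fin n × Fin n)) ⊆
      (farR ×ˢ univ ∪ univ ×ˢ farC) ∪ (boundary I).toFinset.biUnion near := by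
    intro p hp
    simp only [mem_filter, mem_univ, true_and] at hp
    by_cases hfar : D < Nat.dist (σ p.1) p.1 ∨ D < Nat.dist (τ p.2) p.2
    · apply mem_union_left
      rcases hfar with h | h <;> simp [farR, farC, h]
    push Not at hfar
    obtain ⟨b, hb, hnear⟩ := exists_mem_boundary_near_of_ne I σ τ D hp hfar.1 hfar.2
    refine mem_union_right _ (mem_biUnion.2 ⟨b, Set.mem_toFinset.2 hb, ?_⟩)
    rcases hnear with ⟨h1, h2⟩ | ⟨h1, h2⟩
    · exact mem_union_left _ (mem_product.2 ⟨mem_filter.2 ⟨mem_univ _, h1⟩, mem_singleton.2 h2⟩)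
    · exact mem_union_right _ (mem_product.2 ⟨mem_singleton.2 h1, mem_filter.2 ⟨mem_univ _, h2⟩⟩)
  have hnear : ∀ b, #(near b) ≤ 4 * D + 2 := fun b =>
    calc #(near b) ≤ #(W b.1 ×ˢ {b.2}) + #({σ.symm b.1} ×ˢ W b.2) := card_union_le _ _
      _ = #(W b.1) + #(W b.2) := by rw [card_product, card_product, card_singleton,
          card_singleton, mul_one, one_mul]
      _ ≤ (2 * D + 1) + (2 * D + 1) :=
          add_le_add (card_filter_dist_le b.1 D) (card_filter_dist_le b.2 D)
      _ = 4 * D + 2 := by ring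
  have hfarR : #farR * (D + 1) ≤ displacement σ :=
    card_filter_lt_mul_le_sum univ (fun i => Nat.dist (σ i) i) D
  have hfarC : #farC * (D + 1) ≤ displacement τ :=
    card_filter_lt_mul_le_sum univ (fun j => Nat.dist (τ j) j) D
  have hcard : #({p | I (σ p.1) (τ p.2) ≠ I p.1 p.2} : Finset (Fin n × Fin n)) ≤
      #farR * n + n * #farC + (boundary I).ncard * (4 * D + 2) :=
    calc _ ≤ #(farR ×ˢ univ ∪ univ ×ˢ farC) + #((boundary I).toFinset.biUnion near) :=
          (card_le_card hcover).trans (card_union_le _ _)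
      _ ≤ (#farR * n + n * #farC) + ∑ b ∈ (boundary I).toFinset, #(near b) := by
          gcongr
          · simpa only [card_product, card_univ, Fintype.card_fin] using
              card_union_le (farR ×ˢ univ) (univ ×ˢ farC)
          · exact card_biUnion_le
      _ ≤ #farR * n + n * #farC + (boundary I).ncard * (4 * D + 2) := by
          grw [sum_le_card_nsmul _ _ _ fun b _ => hnear b, Set.ncard_eq_toFinset_card', smul_eq_mul]
  calc _ ≤ (#farR * n + n * #farC + (boundary I).ncard * (4 * D + 2)) * (D + 1) :=
        Nat.mul_le_mul_right _ hcard
    _ = #farR * (D + 1) * n + #farC * (D + 1) * n + (boundary I).ncard * (4 * D + 2) * (D + 1) := by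
        ring
    _ ≤ displacement σ * n + displacement τ * n + (boundary I).ncard * (4 * D + 2) * (D + 1) := by
        gcongr
    _ = _ := by ring

end Counting

lemma card_ne_le_of_movesN {n m : ℕ} {I I' : Fin n → Fin n → Bool} (h : MovesN ImgMove m I I') :
    #{p : Fin n × Fin n | I' p.1 p.2 ≠ I p.1 p.2} ≤
      (4 * n + 6 * (boundary I).ncard) * Nat.sqrt m := by
  rcases Nat.eq_zero_or_pos m with rfl | hm
  · obtain rfl : I = I' := h
    simp
  obtain ⟨σ, τ, rfl, hστ⟩ := exists_perm_of_movesN h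
  set D := Nat.sqrt m
  set β := (boundary I).ncard
  have hD : 1 ≤ D := Nat.sqrt_pos.2 hm
  have hmD : m ≤ (D + 1) * (D + 1) := by nlinarith [Nat.lt_succ_sqrt' m]
  have key : #{p : Fin n × Fin n | I (σ p.1) (τ p.2) ≠ I p.1 p.2} * (D + 1) ≤
      (2 * (D + 1) * n + β * (4 * D + 2)) * (D + 1) :=
    calc _ ≤ (displacement σ + displacement τ) * n + β * (4 * D + 2) * (D + 1) :=
          card_ne_comp_perm_mul_le I σ τ D
      _ ≤ 2 * ((D + 1) * (D + 1)) * n + β * (4 * D + 2) * (D + 1) := by gcongr; omega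
      _ = _ := by ring
  calc _ ≤ 2 * (D + 1) * n + β * (4 * D + 2) := Nat.le_of_mul_le_mul_right key (by omega)
    _ ≤ _ := by nlinarith

lemma dHamImg_eq_card_div {n : ℕ} {α : Type} [DecidableEq α] (I J : Fin n → Fin n → α) :
    dHamImg I J = #{p : Fin n × Fin n | I p.1 p.2 ≠ J p.1 p.2} / (n ^ 2 : ℝ) := by
  rw [dHamImg, Nat.card_eq_fintype_card, Fintype.card_subtype]

/-- There is an absolute constant `α > 0` such that: for every `c ≥ 1` and `n`, if `P` is a
nonempty property of `n×n` black-white images all of whose members have a `c`-sparse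
boundary, then for every `ε ∈ (0,1)`, every `I ∈ P`, and every `I'` obtained from `I` by at
most `(α·ε²/c²)·n²` basic moves, `I'` is `ε`-close to `P` in normalized Hamming distance. -/
theorem stmt9 :
    ∃ α : ℝ, 0 < α ∧ ∀ c : ℝ, 1 ≤ c → ∀ n : ℕ, 0 < n →
      ∀ P : Set (Fin n → Fin n → Bool), P.Nonempty →
      (∀ I ∈ P, ((boundary I).ncard : ℝ) ≤ c * n) →
      ∀ ε : ℝ, 0 < ε → ε < 1 → ∀ I ∈ P, ∀ I' : Fin n → Fin n → Bool,
        (∃ m : ℕ, (m : ℝ) ≤ α * ε ^ 2 / c ^ 2 * n ^ 2 ∧ MovesN ImgMove m I I') →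
        ∃ J ∈ P, dHamImg I' J ≤ ε := by
  refine ⟨1 / 100, by norm_num, fun c hc n _ P _ hP ε hε _ I hI I' ⟨m, hm, hmoves⟩ =>
    ⟨I, hI, ?_⟩⟩
  set s := Nat.sqrt m
  have hs : 10 * c * s ≤ ε * n := by
    refine (pow_le_pow_iff_left₀ (by positivity) (by positivity) two_ne_zero).1 ?_
    calc (10 * c * s) ^ 2 = 100 * c ^ 2 * ((s ^ 2 : ℕ) : ℝ) := by push_cast; ring
      _ ≤ 100 * c ^ 2 * (1 / 100 * ε ^ 2 / c ^ 2 * n ^ 2) := by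
          gcongr; exact (Nat.cast_le.2 (Nat.sqrt_le' m)).trans hm
      _ = (ε * n) ^ 2 := by field_simp
  have hcount : (#{p : Fin n × Fin n | I' p.1 p.2 ≠ I p.1 p.2} : ℝ) ≤ (4 * n + 6 * (c * n)) * s :=
    calc _ ≤ ((4 * n + 6 * (boundary I).ncard : ℕ) : ℝ) * s := by
          exact_mod_cast card_ne_le_of_movesN hmoves
      _ ≤ _ := by push_cast; gcongr; exact hP I hI
  rw [dHamImg_eq_card_div]
  refine div_le_of_le_mul₀ (by positivity) hε.le ?_
  calc _ ≤ (4 * n + 6 * (c * n)) * s := hcount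
    _ ≤ 10 * c * s * n := by nlinarith [Nat.cast_nonneg (α := ℝ) n, Nat.cast_nonneg (α := ℝ) s]
    _ ≤ ε * n * n := by gcongr
    _ = ε * n ^ 2 := by ring
end

section
/- Let I be an n×n black-white image in which every pixel in the first row, last row, first column, and last column is white, and let S be a shape of I with S ≠ S⁰. Then the number of pixels encircled by S is at most |B(S)|². -/
/-- `l` is a path from `P` to `Q`: a nonempty list of pixels starting at `P`, ending at `Q`,
in which consecutive pixels are neighbors. -/
def IsPath {n : ℕ} (l : List (Fin n × Fin n)) (P Q : Fin n × Fin n) : Prop :=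
  l ≠ [] ∧ l.head? = some P ∧ l.getLast? = some Q ∧ l.Chain' Nbr

/-- The shape of the image `I` containing the pixel `P`: the connected component of `P`
among pixels of the same color, i.e. all pixels reachable from `P` by a monochromatic path. -/
def shapeOf {n : ℕ} (I : Fin n → Fin n → Bool) (P : Fin n × Fin n) :
    Set (Fin n × Fin n) :=
  {Q | ∃ l : List (Fin n × Fin n), IsPath l P Q ∧ ∀ R ∈ l, I R.1 R.2 = I P.1 P.2}

/-- The outer pixel `(1,1)` (zero-based `(0,0)`). -/
def origin {n : ℕ} (hn : 0 < n) : Fin n × Fin n := (⟨0, hn⟩, ⟨0, hn⟩)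

/-- The outer boundary `B(S)` of a set `S` of pixels: those `Q ∈ S` admitting a path from
the outer pixel to `Q` that does not intersect `S ∖ {Q}`. -/
def outerBdry {n : ℕ} (hn : 0 < n) (S : Set (Fin n × Fin n)) : Set (Fin n × Fin n) :=
  {Q | Q ∈ S ∧ ∃ l : List (Fin n × Fin n), IsPath l (origin hn) Q ∧ ∀ R ∈ l, R ∈ S → R = Q}


/-- The pixel `P` is encircled by the set `S` of pixels: every path from the outer pixel
to `P` intersects `S`. -/
def Encircled {n : ℕ} (hn : 0 < n) (S : Set (Fin n × Fin n)) (P : Fin n × Fin n) : Prop :=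
  ∀ l : List (Fin n × Fin n), IsPath l (origin hn) P → ∃ R ∈ l, R ∈ S

namespace Stmt13Aux

variable {n : ℕ}

lemma nbr_symm {P Q : Fin n × Fin n} (h : Nbr P Q) : Nbr Q P := by
  unfold Nbr at *; tauto

def pix (hn : 0 < n) (a b : ℕ) : Fin n × Fin n :=
  (⟨a % n, Nat.mod_lt _ hn⟩, ⟨b % n, Nat.mod_lt _ hn⟩)

lemma pix_eq (hn : 0 < n) {a b : ℕ} (ha : a < n) (hb : b < n) :
    pix hn a b = (⟨a, ha⟩, ⟨b, hb⟩) := by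
  simp [pix, Prod.ext_iff, Fin.ext_iff, Nat.mod_eq_of_lt ha, Nat.mod_eq_of_lt hb]

lemma nbr_pix_right (hn : 0 < n) {a b : ℕ} (ha : a < n) (hb : b + 1 < n) :
    Nbr (pix hn a b) (pix hn a (b + 1)) := by
  rw [pix_eq hn ha (Nat.lt_of_succ_lt hb), pix_eq hn ha hb]
  exact Or.inl ⟨rfl, Or.inl rfl⟩

lemma nbr_pix_down (hn : 0 < n) {a b : ℕ} (ha : a + 1 < n) (hb : b < n) :
    Nbr (pix hn a b) (pix hn (a + 1) b) := by
  rw [pix_eq hn (Nat.lt_of_succ_lt ha) hb, pix_eq hn ha hb]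
  exact Or.inr ⟨rfl, Or.inl rfl⟩

lemma isPath_map (f : ℕ → Fin n × Fin n) (N : ℕ) (hN : 0 < N)
    (hc : ∀ m, m + 1 < N → Nbr (f m) (f (m + 1))) :
    IsPath ((List.range N).map f) (f 0) (f (N - 1)) := by
  refine ⟨?_, ?_, ?_, ?_⟩
  · simp [hN.ne']
  · rw [List.head?_eq_getElem?]
    simp [hN]
  · rw [List.getLast?_eq_getElem?]
    simp [Nat.sub_lt hN Nat.one_pos]
  · rw [show List.Chain' Nbr _ = List.IsChain Nbr _ from rfl, List.isChain_map]
    obtain ⟨M, rfl⟩ := Nat.exists_eq_succ_of_ne_zero hN.ne'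
    rw [List.isChain_range_succ]
    intro m hm
    exact hc m (by omega)

lemma shapeOf_self (I : Fin n → Fin n → Bool) (P : Fin n × Fin n) : P ∈ shapeOf I P :=
  ⟨[P], ⟨by simp, rfl, rfl, List.isChain_singleton _⟩, by simp⟩

lemma shapeOf_color {I : Fin n → Fin n → Bool} {P Q : Fin n × Fin n}
    (h : Q ∈ shapeOf I P) : I Q.1 Q.2 = I P.1 P.2 := by
  obtain ⟨l, ⟨hne, hhd, hlast, _⟩, hcol⟩ := h
  exact hcol Q (List.mem_of_mem_getLast? hlast)

lemma shapeOf_trans {I : Fin n → Fin n → Bool} {P Q R : Fin n × Fin n}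
    (h1 : Q ∈ shapeOf I P) (h2 : R ∈ shapeOf I Q) : R ∈ shapeOf I P := by
  have hQP : I Q.1 Q.2 = I P.1 P.2 := shapeOf_color h1
  obtain ⟨l1, ⟨hne1, hhd1, hlast1, hch1⟩, hcol1⟩ := h1
  obtain ⟨l2, ⟨hne2, hhd2, hlast2, hch2⟩, hcol2⟩ := h2
  obtain ⟨t, rfl⟩ : ∃ t, l2 = Q :: t := by
    cases l2 with
    | nil => simp at hne2
    | cons a t =>
      simp only [List.head?_cons, Option.some.injEq] at hhd2
      exact ⟨t, by rw [hhd2]⟩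
  cases t with
  | nil =>
    simp only [List.getLast?_singleton, Option.some.injEq] at hlast2
    exact hlast2 ▸ ⟨l1, ⟨hne1, hhd1, hlast1, hch1⟩, hcol1⟩
  | cons b t' =>
    refine ⟨l1 ++ (b :: t'), ⟨by simp, ?_, ?_, ?_⟩, ?_⟩
    · rw [List.head?_append_of_ne_nil _ hne1]; exact hhd1
    · rw [List.getLast?_append_of_ne_nil _ (by simp)]
      simpa using hlast2
    · refine List.IsChain.append hch1 (List.isChain_cons.mp hch2).2 ?_
      intro x hx y hy
      rw [hlast1, Option.mem_some_iff] at hx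
      simp only [List.head?_cons, Option.mem_some_iff] at hy
      subst hx; subst hy
      exact (List.isChain_cons.mp hch2).1 b (by simp)
    · intro R' hR'
      rcases List.mem_append.mp hR' with h | h
      · exact hcol1 R' h
      · exact (hcol2 R' (by simp [h])).trans hQP

lemma shapeOf_symm {I : Fin n → Fin n → Bool} {P Q : Fin n × Fin n}
    (h : Q ∈ shapeOf I P) : P ∈ shapeOf I Q := by
  have hQP : I Q.1 Q.2 = I P.1 P.2 := shapeOf_color h
  obtain ⟨l, ⟨hne, hhd, hlast, hch⟩, hcol⟩ := h
  refine ⟨l.reverse, ⟨by simpa using hne, by rw [List.head?_reverse]; exact hlast,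
    by rw [List.getLast?_reverse]; exact hhd,
    List.isChain_reverse.mpr (hch.imp fun a b hab => nbr_symm hab)⟩, ?_⟩
  intro R hR
  exact (hcol R (by simpa using hR)).trans hQP.symm

lemma shapeOf_eq_of_mem {I : Fin n → Fin n → Bool} {P Q : Fin n × Fin n}
    (h : Q ∈ shapeOf I P) : shapeOf I Q = shapeOf I P :=
  Set.ext fun R => ⟨fun hr => shapeOf_trans h hr, fun hr => shapeOf_trans (shapeOf_symm h) hr⟩

/-- The L-shaped path: along row 0 to column `j`, then down. -/
def Lf (hn : 0 < n) (j : ℕ) : ℕ → Fin n × Fin n :=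
  fun m => if m ≤ j then pix hn 0 m else pix hn (m - j) j

lemma Lf_chain (hn : 0 < n) {i j : ℕ} (hi : i < n) (hj : j < n) :
    ∀ m, m + 1 < i + j + 1 → Nbr (Lf hn j m) (Lf hn j (m + 1)) := by
  intro m hm
  unfold Lf
  rcases lt_trichotomy m j with h | h | h
  · rw [if_pos (by omega), if_pos (by omega)]
    exact nbr_pix_right hn hn (by omega)
  · subst h
    rw [if_pos le_rfl, if_neg (by omega), show m + 1 - m = 1 by omega]
    exact nbr_pix_down hn (by omega) hj
  · rw [if_neg (by omega), if_neg (by omega), show m + 1 - j = (m - j) + 1 by omega]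
    exact nbr_pix_down hn (by omega) hj

lemma Lf_isPath (hn : 0 < n) {i j : ℕ} (hi : i < n) (hj : j < n) :
    IsPath ((List.range (i + j + 1)).map (Lf hn j)) (origin hn) (pix hn i j) := by
  have h := isPath_map (Lf hn j) (i + j + 1) (by omega) (Lf_chain hn hi hj)
  have h0 : Lf hn j 0 = origin hn := by
    simp [Lf, pix, origin, Prod.ext_iff, Fin.ext_iff]
  have hlast : Lf hn j (i + j + 1 - 1) = pix hn i j := by
    simp only [Nat.add_sub_cancel]
    unfold Lf
    rcases Nat.eq_zero_or_pos i with rfl | hi'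
    · rw [if_pos (by omega), Nat.zero_add]
    · rw [if_neg (by omega), show i + j - j = i by omega]
  rwa [h0, hlast] at h

/-- The mirror L-shaped path: down column 0 to row `i`, then right. -/
def Rf (hn : 0 < n) (i : ℕ) : ℕ → Fin n × Fin n :=
  fun m => if m ≤ i then pix hn m 0 else pix hn i (m - i)

lemma Rf_chain (hn : 0 < n) {i c : ℕ} (hi : i < n) (hc : c < n) :
    ∀ m, m + 1 < i + c + 1 → Nbr (Rf hn i m) (Rf hn i (m + 1)) := by
  intro m hm
  unfold Rf
  rcases lt_trichotomy m i with h | h | h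
  · rw [if_pos (by omega), if_pos (by omega)]
    exact nbr_pix_down hn (by omega) hn
  · subst h
    rw [if_pos le_rfl, if_neg (by omega), show m + 1 - m = 1 by omega]
    exact nbr_pix_right hn hi (by omega)
  · rw [if_neg (by omega), if_neg (by omega), show m + 1 - i = (m - i) + 1 by omega]
    exact nbr_pix_right hn hi (by omega)

lemma Rf_isPath (hn : 0 < n) {i c : ℕ} (hi : i < n) (hc : c < n) :
    IsPath ((List.range (i + c + 1)).map (Rf hn i)) (origin hn) (pix hn i c) := by
  have h := isPath_map (Rf hn i) (i + c + 1) (by omega) (Rf_chain hn hi hc)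
  have h0 : Rf hn i 0 = origin hn := by
    simp [Rf, pix, origin, Prod.ext_iff, Fin.ext_iff]
  have hlast : Rf hn i (i + c + 1 - 1) = pix hn i c := by
    simp only [Nat.add_sub_cancel]
    unfold Rf
    rcases Nat.eq_zero_or_pos c with rfl | hc'
    · rw [if_pos (by omega), show i + 0 = i by omega]
    · rw [if_neg (by omega), show i + c - i = c by omega]
  rwa [h0, hlast] at h

lemma exists_col (hn : 0 < n) (S : Set (Fin n × Fin n))
    (hrow0 : ∀ c : Fin n, ((⟨0, hn⟩ : Fin n), c) ∉ S)
    {P : Fin n × Fin n} (hP : Encircled hn S P) :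
    ∃ k : Fin n, (k, P.2) ∈ S := by
  have hpix : pix hn P.1.val P.2.val = P := by
    rw [pix_eq hn P.1.isLt P.2.isLt]
  have hpath := Lf_isPath hn P.1.isLt P.2.isLt
  rw [hpix] at hpath
  obtain ⟨R, hRl, hRS⟩ := hP _ hpath
  obtain ⟨m, hm, rfl⟩ := List.mem_map.mp hRl
  rw [List.mem_range] at hm
  unfold Lf at hRS
  by_cases hmj : m ≤ P.2.val
  · rw [if_pos hmj] at hRS
    exact absurd hRS (by simpa [pix] using hrow0 ⟨m % n, Nat.mod_lt _ hn⟩)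
  · rw [if_neg hmj] at hRS
    have hlt : m - P.2.val < n := by omega
    rw [pix_eq hn hlt P.2.isLt] at hRS
    exact ⟨⟨m - P.2.val, hlt⟩, by simpa using hRS⟩

lemma exists_row (hn : 0 < n) (S : Set (Fin n × Fin n))
    (hcol0 : ∀ r : Fin n, (r, (⟨0, hn⟩ : Fin n)) ∉ S)
    {P : Fin n × Fin n} (hP : Encircled hn S P) :
    ∃ c : Fin n, (P.1, c) ∈ S := by
  have hpix : pix hn P.1.val P.2.val = P := by
    rw [pix_eq hn P.1.isLt P.2.isLt]
  have hpath := Rf_isPath hn P.1.isLt P.2.isLt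
  rw [hpix] at hpath
  obtain ⟨R, hRl, hRS⟩ := hP _ hpath
  obtain ⟨m, hm, rfl⟩ := List.mem_map.mp hRl
  rw [List.mem_range] at hm
  unfold Rf at hRS
  by_cases hmi : m ≤ P.1.val
  · rw [if_pos hmi] at hRS
    exact absurd hRS (by simpa [pix] using hcol0 ⟨m % n, Nat.mod_lt _ hn⟩)
  · rw [if_neg hmi] at hRS
    have hlt : m - P.1.val < n := by omega
    rw [pix_eq hn P.1.isLt hlt] at hRS
    exact ⟨⟨m - P.1.val, hlt⟩, by simpa using hRS⟩

lemma col_outerBdry (hn : 0 < n) (S : Set (Fin n × Fin n))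
    (hrow0 : ∀ c : Fin n, ((⟨0, hn⟩ : Fin n), c) ∉ S)
    (j : Fin n) (hex : ∃ k : Fin n, (k, j) ∈ S) :
    ∃ Q ∈ outerBdry hn S, Q.2 = j := by
  classical
  have hex' : ∃ m : ℕ, ∃ h : m < n, ((⟨m, h⟩ : Fin n), j) ∈ S := by
    obtain ⟨k, hk⟩ := hex
    exact ⟨k.val, k.isLt, by simpa using hk⟩
  obtain ⟨hk₀n, hk₀S⟩ := Nat.find_spec hex'
  set k₀ := Nat.find hex' with hk₀def
  have hk₀min : ∀ m (h : m < n), ((⟨m, h⟩ : Fin n), j) ∈ S → k₀ ≤ m :=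
    fun m h hm => Nat.find_le ⟨h, hm⟩
  have hk₀pos : 0 < k₀ := by
    rcases Nat.eq_zero_or_pos k₀ with h | h
    · have heq : (⟨k₀, hk₀n⟩ : Fin n) = ⟨0, hn⟩ := by simp [Fin.ext_iff, h]
      rw [heq] at hk₀S
      exact absurd hk₀S (hrow0 j)
    · exact h
  refine ⟨(⟨k₀, hk₀n⟩, j), ⟨hk₀S, ?_⟩, rfl⟩
  refine ⟨(List.range (k₀ + j.val + 1)).map (Lf hn j.val), ?_, ?_⟩
  · have h := Lf_isPath hn hk₀n j.isLt
    rwa [pix_eq hn hk₀n j.isLt, show (⟨j.val, j.isLt⟩ : Fin n) = j from Fin.eta _ _] at h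
  · intro R hR hRS
    obtain ⟨m, hm, rfl⟩ := List.mem_map.mp hR
    rw [List.mem_range] at hm
    unfold Lf at hRS ⊢
    by_cases hmj : m ≤ j.val
    · rw [if_pos hmj] at hRS
      exact absurd hRS (by simpa [pix] using hrow0 ⟨m % n, Nat.mod_lt _ hn⟩)
    · rw [if_neg hmj] at hRS ⊢
      have hlt : m - j.val < n := by omega
      rw [pix_eq hn hlt j.isLt] at hRS ⊢
      have h1 : k₀ ≤ m - j.val := hk₀min _ hlt (by simpa using hRS)
      have h2 : m - j.val = k₀ := by omega
      simp [Prod.ext_iff, Fin.ext_iff, h2]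

lemma row_outerBdry (hn : 0 < n) (S : Set (Fin n × Fin n))
    (hcol0 : ∀ r : Fin n, (r, (⟨0, hn⟩ : Fin n)) ∉ S)
    (i : Fin n) (hex : ∃ c : Fin n, (i, c) ∈ S) :
    ∃ Q ∈ outerBdry hn S, Q.1 = i := by
  classical
  have hex' : ∃ m : ℕ, ∃ h : m < n, (i, (⟨m, h⟩ : Fin n)) ∈ S := by
    obtain ⟨c, hc⟩ := hex
    exact ⟨c.val, c.isLt, by simpa using hc⟩
  obtain ⟨hc₀n, hc₀S⟩ := Nat.find_spec hex'
  set c₀ := Nat.find hex' with hc₀def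
  have hc₀min : ∀ m (h : m < n), (i, (⟨m, h⟩ : Fin n)) ∈ S → c₀ ≤ m :=
    fun m h hm => Nat.find_le ⟨h, hm⟩
  have hc₀pos : 0 < c₀ := by
    rcases Nat.eq_zero_or_pos c₀ with h | h
    · have heq : (⟨c₀, hc₀n⟩ : Fin n) = ⟨0, hn⟩ := by simp [Fin.ext_iff, h]
      rw [heq] at hc₀S
      exact absurd hc₀S (hcol0 i)
    · exact h
  refine ⟨(i, ⟨c₀, hc₀n⟩), ⟨hc₀S, ?_⟩, rfl⟩
  refine ⟨(List.range (i.val + c₀ + 1)).map (Rf hn i.val), ?_, ?_⟩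
  · have h := Rf_isPath hn i.isLt hc₀n
    rwa [pix_eq hn i.isLt hc₀n, show (⟨i.val, i.isLt⟩ : Fin n) = i from Fin.eta _ _] at h
  · intro R hR hRS
    obtain ⟨m, hm, rfl⟩ := List.mem_map.mp hR
    rw [List.mem_range] at hm
    unfold Rf at hRS ⊢
    by_cases hmi : m ≤ i.val
    · rw [if_pos hmi] at hRS
      exact absurd hRS (by simpa [pix] using hcol0 ⟨m % n, Nat.mod_lt _ hn⟩)
    · rw [if_neg hmi] at hRS ⊢
      have hlt : m - i.val < n := by omega
      rw [pix_eq hn i.isLt hlt] at hRS ⊢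
      have h1 : c₀ ≤ m - i.val := hc₀min _ hlt (by simpa using hRS)
      have h2 : m - i.val = c₀ := by omega
      simp [Prod.ext_iff, Fin.ext_iff, h2]

end Stmt13Aux

/-- In an image whose border pixels are all white, the number of pixels encircled by a
shape `S ≠ S⁰` is at most `|B(S)|²`. -/
theorem stmt13 {n : ℕ} (hn : 0 < n) (I : Fin n → Fin n → Bool)
    (hborder : ∀ i j : Fin n,
      (i.val = 0 ∨ i.val = n - 1 ∨ j.val = 0 ∨ j.val = n - 1) → I i j = false)
    (P₀ : Fin n × Fin n) (hS : shapeOf I P₀ ≠ shapeOf I (origin hn)) :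
    {P : Fin n × Fin n | Encircled hn (shapeOf I P₀) P}.ncard ≤
      (outerBdry hn (shapeOf I P₀)).ncard ^ 2 := by
  classical
  set S := shapeOf I P₀ with hSdef
  have hrow0 : ∀ c : Fin n, ((⟨0, hn⟩ : Fin n), c) ∉ S := by
    intro c hc
    apply hS
    have h1 : ((⟨0, hn⟩ : Fin n), c) ∈ shapeOf I (origin hn) := by
      refine ⟨(List.range (c.val + 1)).map (fun m => Stmt13Aux.pix hn 0 m), ?_, ?_⟩
      · have h := Stmt13Aux.isPath_map (fun m => Stmt13Aux.pix hn 0 m) (c.val + 1) (by omega)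
          (fun m hm => Stmt13Aux.nbr_pix_right hn hn (by omega))
        have h0 : Stmt13Aux.pix hn 0 0 = origin hn := by
          simp [Stmt13Aux.pix, origin, Prod.ext_iff, Fin.ext_iff]
        have hlast : Stmt13Aux.pix hn 0 (c.val + 1 - 1) = ((⟨0, hn⟩ : Fin n), c) := by
          rw [Nat.add_sub_cancel, Stmt13Aux.pix_eq hn hn c.isLt]
        simpa only [h0, hlast] using h
      · intro R hR
        obtain ⟨m, hm, rfl⟩ := List.mem_map.mp hR
        have h1 : (Stmt13Aux.pix hn 0 m).1.val = 0 := by simp [Stmt13Aux.pix]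
        rw [hborder _ _ (Or.inl h1), hborder _ _ (Or.inl rfl)]
    exact (Stmt13Aux.shapeOf_eq_of_mem hc).symm.trans (Stmt13Aux.shapeOf_eq_of_mem h1)
  have hcol0 : ∀ r : Fin n, (r, (⟨0, hn⟩ : Fin n)) ∉ S := by
    intro r hr
    apply hS
    have h1 : (r, (⟨0, hn⟩ : Fin n)) ∈ shapeOf I (origin hn) := by
      refine ⟨(List.range (r.val + 1)).map (fun m => Stmt13Aux.pix hn m 0), ?_, ?_⟩
      · have h := Stmt13Aux.isPath_map (fun m => Stmt13Aux.pix hn m 0) (r.val + 1) (by omega)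
          (fun m hm => Stmt13Aux.nbr_pix_down hn (by omega) hn)
        have h0 : Stmt13Aux.pix hn 0 0 = origin hn := by
          simp [Stmt13Aux.pix, origin, Prod.ext_iff, Fin.ext_iff]
        have hlast : Stmt13Aux.pix hn (r.val + 1 - 1) 0 = (r, (⟨0, hn⟩ : Fin n)) := by
          rw [Nat.add_sub_cancel, Stmt13Aux.pix_eq hn r.isLt hn]
        simpa only [h0, hlast] using h
      · intro R hR
        obtain ⟨m, hm, rfl⟩ := List.mem_map.mp hR
        have h1 : (Stmt13Aux.pix hn m 0).2.val = 0 := by simp [Stmt13Aux.pix]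
        rw [hborder _ _ (Or.inr (Or.inr (Or.inl h1))), hborder _ _ (Or.inl rfl)]
    exact (Stmt13Aux.shapeOf_eq_of_mem hr).symm.trans (Stmt13Aux.shapeOf_eq_of_mem h1)
  set B := outerBdry hn S with hBdef
  set E := {P : Fin n × Fin n | Encircled hn S P} with hEdef
  have key : ∀ P ∈ E, (∃ Q ∈ B, Q.1 = P.1) ∧ (∃ Q ∈ B, Q.2 = P.2) := by
    intro P hP
    constructor
    · exact Stmt13Aux.row_outerBdry hn S hcol0 P.1 (Stmt13Aux.exists_row hn S hcol0 hP)
    · exact Stmt13Aux.col_outerBdry hn S hrow0 P.2 (Stmt13Aux.exists_col hn S hrow0 hP)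
  set F : (Fin n × Fin n) → (Fin n × Fin n) × (Fin n × Fin n) := fun P =>
    (if h : ∃ Q ∈ B, Q.1 = P.1 then h.choose else P,
     if h : ∃ Q ∈ B, Q.2 = P.2 then h.choose else P) with hFdef
  have hF : ∀ P ∈ E, (F P).1 ∈ B ∧ (F P).1.1 = P.1 ∧ (F P).2 ∈ B ∧ (F P).2.2 = P.2 := by
    intro P hP
    obtain ⟨h1, h2⟩ := key P hP
    simp only [hFdef, dif_pos h1, dif_pos h2]
    exact ⟨h1.choose_spec.1, h1.choose_spec.2, h2.choose_spec.1, h2.choose_spec.2⟩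
  have hmaps : ∀ P ∈ E, F P ∈ B ×ˢ B := by
    intro P hP
    obtain ⟨a1, _, a3, _⟩ := hF P hP
    exact Set.mem_prod.mpr ⟨a1, a3⟩
  have hinj : Set.InjOn F E := by
    intro P hP P' hP' hFF
    obtain ⟨_, b2, _, b4⟩ := hF P hP
    obtain ⟨_, c2, _, c4⟩ := hF P' hP'
    have e1 : P.1 = P'.1 := by rw [← b2, ← c2, hFF]
    have e2 : P.2 = P'.2 := by rw [← b4, ← c4, hFF]
    exact Prod.ext e1 e2
  calc E.ncard ≤ (B ×ˢ B).ncard :=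
        Set.ncard_le_ncard_of_injOn F hmaps hinj (Set.toFinite _)
    _ = B.ncard * B.ncard := by
        rw [← Nat.card_coe_set_eq, ← Nat.card_coe_set_eq,
          Nat.card_congr (Equiv.Set.prod B B), Nat.card_prod]
    _ = B.ncard ^ 2 := (sq B.ncard).symm
end

section
/- For every finite nonempty set S ⊆ ℤ², we have |S| ≤ e(S)²/16, where e(S) denotes the number of ordered pairs (P,P') with P ∈ S, P' ∉ S, and ‖P − P'‖₁ = 1. Equivalently, the edge boundary of any finite nonempty subset of the grid ℤ² has size at least 4√|S|. -/
/-- The edge boundary count `e(S)`: the number of ordered pairs `(P, P')` of `ℓ¹`-adjacent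
points of `ℤ²` with `P ∈ S` and `P' ∉ S`. -/
noncomputable def edgeBdry (S : Finset (ℤ × ℤ)) : ℕ :=
  Nat.card {pq : (ℤ × ℤ) × (ℤ × ℤ) //
    pq.1 ∈ S ∧ pq.2 ∉ S ∧ (pq.1.1 - pq.2.1).natAbs + (pq.1.2 - pq.2.2).natAbs = 1}

namespace EdgeBdryAux

def nbrs (S : Finset (ℤ × ℤ)) : Finset (ℤ × ℤ) :=
  S.biUnion (fun p => {(p.1+1,p.2),(p.1-1,p.2),(p.1,p.2+1),(p.1,p.2-1)})

def B (S : Finset (ℤ × ℤ)) : Finset ((ℤ × ℤ) × (ℤ × ℤ)) :=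
  (S ×ˢ nbrs S).filter (fun pq => pq.1 ∈ S ∧ pq.2 ∉ S ∧
    (pq.1.1 - pq.2.1).natAbs + (pq.1.2 - pq.2.2).natAbs = 1)

lemma mem_B_iff (S : Finset (ℤ × ℤ)) (pq : (ℤ × ℤ) × (ℤ × ℤ)) :
    pq ∈ B S ↔ pq.1 ∈ S ∧ pq.2 ∉ S ∧
      (pq.1.1 - pq.2.1).natAbs + (pq.1.2 - pq.2.2).natAbs = 1 := by
  constructor
  · intro h; exact (Finset.mem_filter.mp h).2
  · intro h
    refine Finset.mem_filter.mpr ⟨Finset.mem_product.mpr ⟨h.1, ?_⟩, h⟩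
    refine Finset.mem_biUnion.mpr ⟨pq.1, h.1, ?_⟩
    have h3 := h.2.2
    have hcase : (pq.2.1 = pq.1.1 + 1 ∧ pq.2.2 = pq.1.2) ∨
        (pq.2.1 = pq.1.1 - 1 ∧ pq.2.2 = pq.1.2) ∨
        (pq.2.1 = pq.1.1 ∧ pq.2.2 = pq.1.2 + 1) ∨
        (pq.2.1 = pq.1.1 ∧ pq.2.2 = pq.1.2 - 1) := by omega
    simp only [Finset.mem_insert, Finset.mem_singleton]
    rcases hcase with ⟨h1,h2⟩|⟨h1,h2⟩|⟨h1,h2⟩|⟨h1,h2⟩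
    · exact Or.inl (Prod.ext h1 h2)
    · exact Or.inr (Or.inl (Prod.ext h1 h2))
    · exact Or.inr (Or.inr (Or.inl (Prod.ext h1 h2)))
    · exact Or.inr (Or.inr (Or.inr (Prod.ext h1 h2)))

lemma edgeBdry_eq (S : Finset (ℤ × ℤ)) : edgeBdry S = (B S).card := by
  have e := Nat.card_congr
    (Equiv.subtypeEquivRight (fun pq => (mem_B_iff S pq).symm))
  rw [edgeBdry, e, Nat.card_eq_fintype_card, Fintype.card_coe]

/-- rightmost point of a row gives a boundary pair -/
lemma row_right (S : Finset (ℤ × ℤ)) {y : ℤ} (hy : y ∈ S.image Prod.snd) :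
    ∃ pq ∈ (B S).filter (fun pq => pq.2.1 = pq.1.1 + 1), pq.1.2 = y := by
  classical
  have hne : ((S.filter (fun p => p.2 = y)).image Prod.fst).Nonempty := by
    obtain ⟨p, hp, hpy⟩ := Finset.mem_image.mp hy
    exact ⟨p.1, Finset.mem_image.mpr ⟨p, Finset.mem_filter.mpr ⟨hp, hpy⟩, rfl⟩⟩
  set x := ((S.filter (fun p => p.2 = y)).image Prod.fst).max' hne with hx
  have hxS : (x, y) ∈ S := by
    obtain ⟨p, hp, hpx⟩ := Finset.mem_image.mp (Finset.max'_mem _ hne)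
    have := Finset.mem_filter.mp hp
    have : p = (x, y) := Prod.ext hpx this.2
    exact this ▸ (Finset.mem_filter.mp hp).1
  have hout : (x + 1, y) ∉ S := by
    intro hin
    have : x + 1 ≤ x := Finset.le_max' ((S.filter (fun p => p.2 = y)).image Prod.fst) (x+1)
      (Finset.mem_image.mpr ⟨(x+1, y), Finset.mem_filter.mpr ⟨hin, rfl⟩, rfl⟩)
    omega
  refine ⟨((x, y), (x+1, y)), ?_, rfl⟩
  refine Finset.mem_filter.mpr ⟨(mem_B_iff S _).mpr ⟨hxS, hout, ?_⟩, rfl⟩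
  simp

lemma row_left (S : Finset (ℤ × ℤ)) {y : ℤ} (hy : y ∈ S.image Prod.snd) :
    ∃ pq ∈ (B S).filter (fun pq => pq.2.1 = pq.1.1 - 1), pq.1.2 = y := by
  classical
  have hne : ((S.filter (fun p => p.2 = y)).image Prod.fst).Nonempty := by
    obtain ⟨p, hp, hpy⟩ := Finset.mem_image.mp hy
    exact ⟨p.1, Finset.mem_image.mpr ⟨p, Finset.mem_filter.mpr ⟨hp, hpy⟩, rfl⟩⟩
  set x := ((S.filter (fun p => p.2 = y)).image Prod.fst).min' hne with hx
  have hxS : (x, y) ∈ S := by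
    obtain ⟨p, hp, hpx⟩ := Finset.mem_image.mp (Finset.min'_mem _ hne)
    have h2 := Finset.mem_filter.mp hp
    have : p = (x, y) := Prod.ext hpx h2.2
    exact this ▸ h2.1
  have hout : (x - 1, y) ∉ S := by
    intro hin
    have : x ≤ x - 1 := Finset.min'_le ((S.filter (fun p => p.2 = y)).image Prod.fst) (x-1)
      (Finset.mem_image.mpr ⟨(x-1, y), Finset.mem_filter.mpr ⟨hin, rfl⟩, rfl⟩)
    omega
  refine ⟨((x, y), (x-1, y)), ?_, rfl⟩
  refine Finset.mem_filter.mpr ⟨(mem_B_iff S _).mpr ⟨hxS, hout, ?_⟩, rfl⟩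
  simp

lemma col_up (S : Finset (ℤ × ℤ)) {x : ℤ} (hx : x ∈ S.image Prod.fst) :
    ∃ pq ∈ (B S).filter (fun pq => pq.2.2 = pq.1.2 + 1), pq.1.1 = x := by
  classical
  have hne : ((S.filter (fun p => p.1 = x)).image Prod.snd).Nonempty := by
    obtain ⟨p, hp, hpx⟩ := Finset.mem_image.mp hx
    exact ⟨p.2, Finset.mem_image.mpr ⟨p, Finset.mem_filter.mpr ⟨hp, hpx⟩, rfl⟩⟩
  set y := ((S.filter (fun p => p.1 = x)).image Prod.snd).max' hne with hy
  have hyS : (x, y) ∈ S := by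
    obtain ⟨p, hp, hpy⟩ := Finset.mem_image.mp (Finset.max'_mem _ hne)
    have h2 := Finset.mem_filter.mp hp
    have : p = (x, y) := Prod.ext h2.2 hpy
    exact this ▸ h2.1
  have hout : (x, y + 1) ∉ S := by
    intro hin
    have : y + 1 ≤ y := Finset.le_max' ((S.filter (fun p => p.1 = x)).image Prod.snd) (y+1)
      (Finset.mem_image.mpr ⟨(x, y+1), Finset.mem_filter.mpr ⟨hin, rfl⟩, rfl⟩)
    omega
  refine ⟨((x, y), (x, y+1)), ?_, rfl⟩
  refine Finset.mem_filter.mpr ⟨(mem_B_iff S _).mpr ⟨hyS, hout, ?_⟩, rfl⟩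
  simp

lemma col_down (S : Finset (ℤ × ℤ)) {x : ℤ} (hx : x ∈ S.image Prod.fst) :
    ∃ pq ∈ (B S).filter (fun pq => pq.2.2 = pq.1.2 - 1), pq.1.1 = x := by
  classical
  have hne : ((S.filter (fun p => p.1 = x)).image Prod.snd).Nonempty := by
    obtain ⟨p, hp, hpx⟩ := Finset.mem_image.mp hx
    exact ⟨p.2, Finset.mem_image.mpr ⟨p, Finset.mem_filter.mpr ⟨hp, hpx⟩, rfl⟩⟩
  set y := ((S.filter (fun p => p.1 = x)).image Prod.snd).min' hne with hy
  have hyS : (x, y) ∈ S := by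
    obtain ⟨p, hp, hpy⟩ := Finset.mem_image.mp (Finset.min'_mem _ hne)
    have h2 := Finset.mem_filter.mp hp
    have : p = (x, y) := Prod.ext h2.2 hpy
    exact this ▸ h2.1
  have hout : (x, y - 1) ∉ S := by
    intro hin
    have : y ≤ y - 1 := Finset.min'_le ((S.filter (fun p => p.1 = x)).image Prod.snd) (y-1)
      (Finset.mem_image.mpr ⟨(x, y-1), Finset.mem_filter.mpr ⟨hin, rfl⟩, rfl⟩)
    omega
  refine ⟨((x, y), (x, y-1)), ?_, rfl⟩
  refine Finset.mem_filter.mpr ⟨(mem_B_iff S _).mpr ⟨hyS, hout, ?_⟩, rfl⟩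
  simp

end EdgeBdryAux

open EdgeBdryAux in
/-- Edge-isoperimetric inequality in the grid `ℤ²`: every finite nonempty `S ⊆ ℤ²`
satisfies `|S| ≤ e(S)²/16`. -/
theorem stmt14 (S : Finset (ℤ × ℤ)) (hS : S.Nonempty) :
    (S.card : ℝ) ≤ (edgeBdry S : ℝ) ^ 2 / 16 := by
  classical
  set rows := S.image Prod.snd with hrows
  set cols := S.image Prod.fst with hcols
  set B1 := (B S).filter (fun pq => pq.2.1 = pq.1.1 + 1) with hB1
  set B2 := (B S).filter (fun pq => pq.2.1 = pq.1.1 - 1) with hB2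
  set B3 := (B S).filter (fun pq => pq.2.2 = pq.1.2 + 1) with hB3
  set B4 := (B S).filter (fun pq => pq.2.2 = pq.1.2 - 1) with hB4
  -- each Bi surjects onto rows/cols
  have h1 : rows.card ≤ B1.card := by
    apply Finset.card_le_card_of_surjOn (fun pq => pq.1.2)
    intro y hy
    obtain ⟨pq, hpq, hpy⟩ := row_right S (by simpa [hrows] using hy)
    exact ⟨pq, hpq, hpy⟩
  have h2 : rows.card ≤ B2.card := by
    apply Finset.card_le_card_of_surjOn (fun pq => pq.1.2)
    intro y hy
    obtain ⟨pq, hpq, hpy⟩ := row_left S (by simpa [hrows] using hy)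
    exact ⟨pq, hpq, hpy⟩
  have h3 : cols.card ≤ B3.card := by
    apply Finset.card_le_card_of_surjOn (fun pq => pq.1.1)
    intro x hx
    obtain ⟨pq, hpq, hpx⟩ := col_up S (by simpa [hcols] using hx)
    exact ⟨pq, hpq, hpx⟩
  have h4 : cols.card ≤ B4.card := by
    apply Finset.card_le_card_of_surjOn (fun pq => pq.1.1)
    intro x hx
    obtain ⟨pq, hpq, hpx⟩ := col_down S (by simpa [hcols] using hx)
    exact ⟨pq, hpq, hpx⟩
  -- the Bi are pairwise disjoint subsets of B
  have hsum : B1.card + B2.card + B3.card + B4.card ≤ (B S).card := by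
    have d12 : Disjoint B1 B2 := by
      rw [Finset.disjoint_left]
      intro pq hp1 hp2
      have e1 := (Finset.mem_filter.mp hp1).2
      have e2 := (Finset.mem_filter.mp hp2).2
      omega
    have d13 : Disjoint B1 B3 := by
      rw [Finset.disjoint_left]
      intro pq hp1 hp3
      have e1 := (Finset.mem_filter.mp hp1).2
      have e3 := (Finset.mem_filter.mp hp3).2
      have hb := ((mem_B_iff S pq).mp (Finset.mem_filter.mp hp1).1).2.2
      omega
    have d14 : Disjoint B1 B4 := by
      rw [Finset.disjoint_left]
      intro pq hp1 hp4
      have e1 := (Finset.mem_filter.mp hp1).2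
      have e4 := (Finset.mem_filter.mp hp4).2
      have hb := ((mem_B_iff S pq).mp (Finset.mem_filter.mp hp1).1).2.2
      omega
    have d23 : Disjoint B2 B3 := by
      rw [Finset.disjoint_left]
      intro pq hp2 hp3
      have e2 := (Finset.mem_filter.mp hp2).2
      have e3 := (Finset.mem_filter.mp hp3).2
      have hb := ((mem_B_iff S pq).mp (Finset.mem_filter.mp hp2).1).2.2
      omega
    have d24 : Disjoint B2 B4 := by
      rw [Finset.disjoint_left]
      intro pq hp2 hp4
      have e2 := (Finset.mem_filter.mp hp2).2
      have e4 := (Finset.mem_filter.mp hp4).2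
      have hb := ((mem_B_iff S pq).mp (Finset.mem_filter.mp hp2).1).2.2
      omega
    have d34 : Disjoint B3 B4 := by
      rw [Finset.disjoint_left]
      intro pq hp3 hp4
      have e3 := (Finset.mem_filter.mp hp3).2
      have e4 := (Finset.mem_filter.mp hp4).2
      omega
    have hsub : B1 ∪ B2 ∪ B3 ∪ B4 ⊆ B S := by
      intro pq hpq
      simp only [Finset.mem_union] at hpq
      rcases hpq with ((h|h)|h)|h <;> exact (Finset.mem_filter.mp h).1
    calc B1.card + B2.card + B3.card + B4.card
        = (B1 ∪ B2 ∪ B3 ∪ B4).card := by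
          rw [Finset.card_union_of_disjoint, Finset.card_union_of_disjoint,
            Finset.card_union_of_disjoint d12]
          · exact Finset.disjoint_union_left.mpr ⟨d13, d23⟩
          · exact Finset.disjoint_union_left.mpr
              ⟨Finset.disjoint_union_left.mpr ⟨d14, d24⟩, d34⟩
      _ ≤ (B S).card := Finset.card_le_card hsub
  have hE : 2 * rows.card + 2 * cols.card ≤ edgeBdry S := by
    rw [edgeBdry_eq]; omega
  have hcard : S.card ≤ cols.card * rows.card := by
    calc S.card ≤ (cols ×ˢ rows).card := by
          apply Finset.card_le_card
          intro p hp
          exact Finset.mem_product.mpr ⟨Finset.mem_image.mpr ⟨p, hp, rfl⟩,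
            Finset.mem_image.mpr ⟨p, hp, rfl⟩⟩
      _ = cols.card * rows.card := Finset.card_product _ _
  -- real arithmetic
  have hr : (0:ℝ) ≤ (rows.card : ℝ) := by positivity
  have hc : (0:ℝ) ≤ (cols.card : ℝ) := by positivity
  have hE' : 2 * (rows.card : ℝ) + 2 * (cols.card : ℝ) ≤ (edgeBdry S : ℝ) := by
    exact_mod_cast hE
  have hcard' : (S.card : ℝ) ≤ (cols.card : ℝ) * (rows.card : ℝ) := by
    exact_mod_cast hcard
  nlinarith [sq_nonneg ((rows.card : ℝ) - (cols.card : ℝ)),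
    sq_nonneg (2 * (rows.card : ℝ) + 2 * (cols.card : ℝ)),
    mul_self_nonneg ((edgeBdry S : ℝ) - (2 * (rows.card : ℝ) + 2 * (cols.card : ℝ)))]
end

section
/- There exists an absolute constant C > 0 such that for every positive integer n, every n×n black-white image in which all pixels of the first row, last row, first column, and last column are white, and every shape S ≠ S⁰ of the image with B(S) nonempty, there exists a path of length at most C·|B(S)| (repetitions of pixels allowed) that contains every pixel of B(S). -/
section generic
variable {α : Type*} (A : α → α → Prop)

/-- connectivity within a set via walks -/
def Conn (X : Set α) (a b : α) : Prop :=
  ∃ l : List α, l ≠ [] ∧ l.head? = some a ∧ l.getLast? = some b ∧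
    l.Chain' A ∧ ∀ x ∈ l, x ∈ X

variable {A}

lemma Conn.refl {X : Set α} {a : α} (ha : a ∈ X) : Conn A X a a :=
  ⟨[a], by simp, by simp, by simp, List.isChain_singleton _, by simpa⟩

lemma Conn.mem_left {X : Set α} {a b : α} (h : Conn A X a b) : a ∈ X := by
  obtain ⟨l, hne, hh, -, -, hX⟩ := h
  exact hX a (List.mem_of_mem_head? hh)

lemma Conn.mem_right {X : Set α} {a b : α} (h : Conn A X a b) : b ∈ X := by
  obtain ⟨l, hne, -, hl, -, hX⟩ := h
  exact hX b (List.mem_of_mem_getLast? hl)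

lemma Conn.symm (hA : Symmetric A) {X : Set α} {a b : α} (h : Conn A X a b) :
    Conn A X b a := by
  obtain ⟨l, hne, hh, hl, hc, hX⟩ := h
  refine ⟨l.reverse, by simpa, by simpa [List.head?_reverse],
    by simpa [List.getLast?_reverse], ?_, by simpa⟩
  dsimp only [List.Chain'] at hc ⊢; rw [List.isChain_reverse]
  exact hc.imp (fun {x y} h => hA h)

lemma Conn.trans {X : Set α} {a b c : α}
    (h1 : Conn A X a b) (h2 : Conn A X b c) : Conn A X a c := by
  obtain ⟨l1, hne1, hh1, hl1, hc1, hX1⟩ := h1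
  obtain ⟨l2, hne2, hh2, hl2, hc2, hX2⟩ := h2
  rcases l2 with _ | ⟨x, t⟩
  · simp at hne2
  simp only [List.head?_cons, Option.some_inj] at hh2
  subst hh2
  rcases t with _ | ⟨y, t'⟩
  · have : x = c := by simpa using hl2
    exact ⟨l1, hne1, hh1, this ▸ hl1, hc1, hX1⟩
  · refine ⟨l1 ++ y :: t', by simp [hne1], ?_, ?_, ?_, ?_⟩
    · rw [List.head?_append_of_ne_nil _ hne1]; exact hh1
    · rw [List.getLast?_append_of_ne_nil _ (by simp)]
      simpa using hl2
    · dsimp only [List.Chain']; rw [List.isChain_append]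
      refine ⟨hc1, (List.isChain_cons.1 hc2).2, ?_⟩
      intro u hu v hv
      rw [hl1] at hu
      simp only [Option.mem_def, Option.some_inj] at hu hv
      subst hu
      simp only [List.head?_cons, Option.some_inj] at hv
      subst hv
      exact (List.isChain_cons_cons.1 hc2).1
    · intro x hx
      rcases List.mem_append.1 hx with h | h
      · exact hX1 x h
      · exact hX2 x (List.mem_cons_of_mem _ h)

lemma Conn.mono {X Y : Set α} (hXY : X ⊆ Y) {a b : α} (h : Conn A X a b) :
    Conn A Y a b := by
  obtain ⟨l, h1, h2, h3, h4, h5⟩ := h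
  exact ⟨l, h1, h2, h3, h4, fun x hx => hXY (h5 x hx)⟩

/-- extend a walk by one adjacent vertex -/
lemma Conn.snoc {X : Set α} {a b c : α} (h : Conn A X a b) (hbc : A b c) (hc : c ∈ X) :
    Conn A X a c := by
  obtain ⟨l, hne, hh, hl, hchain, hX⟩ := h
  refine ⟨l ++ [c], by simp, ?_, ?_, ?_, ?_⟩
  · rw [List.head?_append_of_ne_nil _ hne]; exact hh
  · exact List.getLast?_concat
  · dsimp only [List.Chain']; rw [List.isChain_append]
    refine ⟨hchain, by simp, ?_⟩
    intro u hu v hv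
    rw [hl] at hu
    simp only [Option.mem_def, Option.some_inj, List.head?_cons] at hu hv
    subst hu; subst hv; exact hbc
  · intro x hx
    rcases List.mem_append.1 hx with h | h
    · exact hX x h
    · simp only [List.mem_singleton] at h; subst h; exact hc



lemma chain'_insert_detour (hA : Symmetric A) {s t : List α} {w v : α}
    (h : List.Chain' A (s ++ w :: t)) (hwv : A w v) :
    List.Chain' A (s ++ w :: v :: w :: t) := by
  dsimp only [List.Chain'] at h ⊢; rw [List.isChain_append] at h ⊢
  obtain ⟨h1, h2, h3⟩ := h
  refine ⟨h1, ?_, ?_⟩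
  · rw [List.isChain_cons_cons]
    refine ⟨hwv, ?_⟩
    rw [List.isChain_cons_cons]
    exact ⟨hA hwv, h2⟩
  · intro x hx y hy
    simp only [List.head?_cons, Option.mem_def, Option.some_inj] at hy
    subst hy
    exact h3 x hx w (by simp)

/-- a connected finite nonempty set admits a covering walk of length ≤ 2·ncard -/
lemma exists_cover_walk_aux (hA : Symmetric A) :
    ∀ k : ℕ, ∀ X : Set α, X.Finite → X.Nonempty →
    (∀ a ∈ X, ∀ b ∈ X, Conn A X a b) → X.ncard ≤ k →
    ∃ l : List α, l.Chain' A ∧ (∀ x ∈ X, x ∈ l) ∧ l.length ≤ 2 * X.ncard := by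
  intro k
  induction k with
  | zero =>
    intro X hfin hne hconn hcard
    exact absurd hcard (by have := (Set.ncard_pos hfin).2 hne; omega)
  | succ k ih =>
    intro X hfin hne hconn hcard
    obtain ⟨r, hr⟩ := hne
    -- distance to r within X
    set D : α → ℕ := fun u => sInf {m | ∃ l : List α, l ≠ [] ∧ l.head? = some u ∧
      l.getLast? = some r ∧ l.Chain' A ∧ (∀ x ∈ l, x ∈ X) ∧ l.length = m} with hD
    have hDne : ∀ u ∈ X, {m | ∃ l : List α, l ≠ [] ∧ l.head? = some u ∧
        l.getLast? = some r ∧ l.Chain' A ∧ (∀ x ∈ l, x ∈ X) ∧ l.length = m}.Nonempty := by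
      intro u hu
      obtain ⟨l, h1, h2, h3, h4, h5⟩ := hconn u hu r hr
      exact ⟨l.length, l, h1, h2, h3, h4, h5, rfl⟩
    have hDwalk : ∀ u ∈ X, ∃ l : List α, l ≠ [] ∧ l.head? = some u ∧
        l.getLast? = some r ∧ l.Chain' A ∧ (∀ x ∈ l, x ∈ X) ∧ l.length = D u := by
      intro u hu
      exact Nat.sInf_mem (hDne u hu)
    have hDpos : ∀ u ∈ X, 1 ≤ D u := by
      intro u hu
      obtain ⟨l, h1, _, _, _, _, h6⟩ := hDwalk u hu
      rw [← h6]
      exact Nat.one_le_iff_ne_zero.2 (by simpa using h1)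
    by_cases hXsing : ∀ u ∈ X, u = r
    · -- X = {r}
      refine ⟨[r], List.isChain_singleton _, ?_, ?_⟩
      · intro x hx; simp [hXsing x hx]
      · have : 1 ≤ X.ncard := (Set.ncard_pos hfin).2 ⟨r, hr⟩
        simp only [List.length_cons, List.length_nil]
        omega
    · push_neg at hXsing
      obtain ⟨v0, hv0X, hv0r⟩ := hXsing
      obtain ⟨v, hvX, hvmax⟩ := Set.Finite.exists_maximalFor D X hfin ⟨r, hr⟩
      have hvmax' : ∀ u ∈ X, D u ≤ D v := by
        intro u hu
        by_contra h
        push_neg at h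
        exact absurd (hvmax hu h.le) (by omega)
      -- D r = 1
      have hDr : D r = 1 := by
        apply le_antisymm
        · exact Nat.sInf_le ⟨[r], by simp, by simp, by simp, List.isChain_singleton _, by simpa, by simp⟩
        · exact hDpos r hr
      -- D v0 ≥ 2
      have hDv0 : 2 ≤ D v0 := by
        rcases Nat.lt_or_ge (D v0) 2 with h | h
        · exfalso
          have h1 := hDpos v0 hv0X
          have : D v0 = 1 := by omega
          obtain ⟨l, hl1, hl2, hl3, _, _, hl6⟩ := hDwalk v0 hv0X
          rw [this] at hl6
          rcases l with _ | ⟨x, t⟩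
          · simp at hl1
          · simp only [List.length_cons] at hl6
            have : t = [] := by
              cases t
              · rfl
              · simp at hl6
            subst this
            simp only [List.head?_cons, Option.some_inj] at hl2
            have : x = r := by simpa using hl3
            exact hv0r (hl2 ▸ this ▸ rfl)
        · exact h
      have hDv : 2 ≤ D v := le_trans hDv0 (hvmax' v0 hv0X)
      have hvr : v ≠ r := fun h => by rw [h, hDr] at hDv; omega
      -- minimal walk from v
      obtain ⟨lv, hlv1, hlv2, hlv3, hlv4, hlv5, hlv6⟩ := hDwalk v hvX
      rcases lv with _ | ⟨x, t⟩
      · simp at hlv1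
      simp only [List.head?_cons, Option.some_inj] at hlv2
      subst hlv2
      rcases t with _ | ⟨w, t'⟩
      · exfalso
        have : x = r := by simpa using hlv3
        exact hvr this
      -- w : second vertex
      have hAvw : A x w := (List.isChain_cons_cons.1 hlv4).1
      have hwX : w ∈ X := hlv5 w (by simp)
      have hwv : w ≠ x := by
        intro h
        subst h
        -- w::t' would be a shorter walk
        have hle : D w ≤ t'.length + 1 := Nat.sInf_le ⟨w :: t', by simp,
          by simp, by simpa using hlv3, (List.isChain_cons_cons.1 hlv4).2,
          fun y hy => hlv5 y (List.mem_cons_of_mem _ hy), by simp⟩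
        have := hvmax' w hwX
        simp only [List.length_cons] at hlv6
        omega
      -- X' = X \ {v}
      set X' : Set α := X \ {x} with hX'
      have hrX' : r ∈ X' := ⟨hr, by simpa using hvr.symm⟩
      have hfin' : X'.Finite := hfin.diff
      have hcard' : X'.ncard + 1 = X.ncard := Set.ncard_diff_singleton_add_one hvX hfin
      -- minimal walks avoid v
      have hminavoid : ∀ u ∈ X', Conn A X' u r := by
        intro u hu
        obtain ⟨lu, h1, h2, h3, h4, h5, h6⟩ := hDwalk u hu.1
        refine ⟨lu, h1, h2, h3, h4, ?_⟩
        intro y hy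
        refine ⟨h5 y hy, ?_⟩
        simp only [Set.mem_singleton_iff]
        intro hyx
        subst hyx
        -- y = x = v lies on minimal walk from u
        obtain ⟨s, t, hst⟩ := List.append_of_mem hy
        have hsne : s ≠ [] := by
          intro hs
          subst hs
          simp only [List.nil_append] at hst
          subst hst
          simp only [List.head?_cons, Option.some_inj] at h2
          exact (by simpa using hu.2 : u ≠ y) h2.symm
        have hsuffwalk : D y ≤ t.length + 1 := by
          apply Nat.sInf_le
          refine ⟨y :: t, by simp, by simp, ?_, ?_, ?_, by simp⟩
          · rw [hst] at h3
            rwa [List.getLast?_append_of_ne_nil _ (by simp)] at h3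
          · exact List.IsChain.suffix h4 (by rw [hst]; exact ⟨s, rfl⟩)
          · intro z hz
            apply h5
            rw [hst]
            exact List.mem_append.2 (Or.inr hz)
        have hlen : lu.length = s.length + t.length + 1 := by
          rw [hst]; simp; omega
        have h7 := hvmax' u hu.1
        have h8 : 1 ≤ s.length := Nat.one_le_iff_ne_zero.2 (by simpa using hsne)
        omega
      have hconn' : ∀ a ∈ X', ∀ b ∈ X', Conn A X' a b := by
        intro a ha b hb
        exact (hminavoid a ha).trans ((hminavoid b hb).symm hA)
      have hne' : X'.Nonempty := ⟨r, hrX'⟩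
      obtain ⟨l', hc', hcov', hlen'⟩ := ih X' hfin' hne' hconn' (by omega)
      -- insert detour at w
      have hwX' : w ∈ X' := ⟨hwX, by simpa using hwv⟩
      obtain ⟨s, t, hst⟩ := List.append_of_mem (hcov' w hwX')
      refine ⟨s ++ w :: x :: w :: t, ?_, ?_, ?_⟩
      · exact chain'_insert_detour hA (hst ▸ hc') (hA hAvw)
      · intro z hz
        by_cases hzx : z = x
        · subst hzx; simp
        · have : z ∈ l' := hcov' z ⟨hz, by simpa using hzx⟩
          rw [hst] at this
          rcases List.mem_append.1 this with h | h
          · exact List.mem_append.2 (Or.inl h)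
          · rcases List.mem_cons.1 h with h | h
            · subst h; simp
            · simp [h]
      · have : (s ++ w :: x :: w :: t).length = l'.length + 2 := by
          rw [hst]; simp; omega
        omega

lemma exists_cover_walk (hA : Symmetric A) (X : Set α) (hfin : X.Finite) (hne : X.Nonempty)
    (hconn : ∀ a ∈ X, ∀ b ∈ X, Conn A X a b) :
    ∃ l : List α, l.Chain' A ∧ (∀ x ∈ X, x ∈ l) ∧ l.length ≤ 2 * X.ncard :=
  exists_cover_walk_aux hA X.ncard X hfin hne hconn le_rfl

/-- every vertex on a walk is reachable -/
lemma conn_all_of_walk {Y : Set α} :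
    ∀ l : List α, l.Chain' A → (∀ z ∈ l, z ∈ Y) → ∀ a, l.head? = some a →
      ∀ x ∈ l, Conn A Y a x := by
  intro l
  induction l with
  | nil => intro _ _ a ha; simp at ha
  | cons o t ih =>
    intro hc hY a ha x hx
    simp only [List.head?_cons, Option.some_inj] at ha
    subst ha
    rcases List.mem_cons.1 hx with rfl | hx'
    · exact Conn.refl (hY _ hx)
    · rcases t with _ | ⟨y, t'⟩
      · simp at hx'
      · have h1 : Conn A Y o y := by
          refine ⟨[o, y], by simp, by simp, by simp, ?_, ?_⟩
          · exact List.isChain_cons_cons.2 ⟨(List.isChain_cons_cons.1 hc).1, by simp⟩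
          · intro z hz
            apply hY
            simp only [List.mem_cons, List.not_mem_nil, or_false] at hz ⊢
            tauto
        have h2 := ih (List.isChain_cons_cons.1 hc).2 (fun z hz => hY z (List.mem_cons_of_mem _ hz))
          y rfl x hx'
        exact h1.trans h2

/-- find the pixel just before the first entry of `Y` along a walk -/
lemma exists_before_first {Y : Set α} :
    ∀ l : List α, l.Chain' A → ∀ o, l.head? = some o → ∀ Q, l.getLast? = some Q →
      (∀ z ∈ l, z ∈ Y → z = Q) → o ∉ Y → Q ∈ Y →
      ∃ x, Conn A {z | z ∉ Y} o x ∧ A x Q := by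
  intro l
  induction l with
  | nil => intro _ o ho; simp at ho
  | cons o' t ih =>
    intro hc o ho Q hQ hall hoY hQY
    simp only [List.head?_cons, Option.some_inj] at ho
    subst ho
    rcases t with _ | ⟨y, t'⟩
    · have : o' = Q := by simpa using hQ
      subst this
      exact absurd hQY hoY
    · by_cases hy : y ∈ Y
      · have hyQ : y = Q := hall y (by simp) hy
        refine ⟨o', Conn.refl hoY, ?_⟩
        rw [← hyQ]
        exact (List.isChain_cons_cons.1 hc).1
      · obtain ⟨x, hx1, hx2⟩ := ih (List.isChain_cons_cons.1 hc).2 y rfl Q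
          (by simpa using hQ) (fun z hz hzY => hall z (List.mem_cons_of_mem _ hz) hzY) hy hQY
        refine ⟨x, ?_, hx2⟩
        refine Conn.trans ?_ hx1
        refine ⟨[o', y], by simp, by simp, by simp, ?_, ?_⟩
        · exact List.isChain_cons_cons.2 ⟨(List.isChain_cons_cons.1 hc).1, by simp⟩
        · intro z hz
          simp only [List.mem_cons, List.not_mem_nil, or_false] at hz
          rcases hz with rfl | rfl
          · exact hoY
          · exact hy


end generic


open Classical in
noncomputable def pind (P : Prop) : ZMod 2 := if P then 1 else 0

lemma pind_pos {P : Prop} (h : P) : pind P = 1 := by simp [pind, h]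
lemma pind_neg {P : Prop} (h : ¬ P) : pind P = 0 := by simp [pind, h]
lemma pind_iff {P Q : Prop} (h : P ↔ Q) : pind P = pind Q := by
  by_cases hP : P
  · rw [pind_pos hP, pind_pos (h.1 hP)]
  · rw [pind_neg hP, pind_neg (fun hq => hP (h.2 hq))]

def Zadj (p q : ℤ × ℤ) : Prop :=
  (p.1 = q.1 ∧ (p.2 = q.2 + 1 ∨ q.2 = p.2 + 1)) ∨
  (p.2 = q.2 ∧ (p.1 = q.1 + 1 ∨ q.1 = p.1 + 1))

lemma Zadj_symm : Symmetric Zadj := by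
  intro p q h
  rcases h with ⟨h1, h2⟩ | ⟨h1, h2⟩
  · exact Or.inl ⟨h1.symm, h2.symm⟩
  · exact Or.inr ⟨h1.symm, h2.symm⟩

section core

variable (S W : Set (ℤ × ℤ))

/-- the boundary band -/
def Dband : Set (ℤ × ℤ) :=
  {p | (p ∈ S ∧ ∃ q ∈ W, Zadj p q) ∨ (p ∈ W ∧ ∃ q ∈ S, Zadj p q)}

def ZCut (p q : ℤ × ℤ) : Prop :=
  Zadj p q ∧ ((p ∈ S ∧ q ∈ W) ∨ (p ∈ W ∧ q ∈ S))

variable {S W}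

lemma ZCut_symm {p q : ℤ × ℤ} (h : ZCut S W p q) : ZCut S W q p := by
  obtain ⟨h1, h2⟩ := h
  exact ⟨Zadj_symm h1, h2.symm.imp And.symm And.symm⟩

lemma ZCut_memD {p q : ℤ × ℤ} (h : ZCut S W p q) : p ∈ Dband S W ∧ q ∈ Dband S W := by
  obtain ⟨h1, h2⟩ := h
  rcases h2 with ⟨hp, hq⟩ | ⟨hp, hq⟩
  · exact ⟨Or.inl ⟨hp, q, hq, h1⟩, Or.inr ⟨hq, p, hp, Zadj_symm h1⟩⟩
  · exact ⟨Or.inr ⟨hp, q, hq, h1⟩, Or.inl ⟨hq, p, hp, Zadj_symm h1⟩⟩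

lemma ZCut_conn {p q : ℤ × ℤ} (h : ZCut S W p q) : Conn Zadj (Dband S W) p q := by
  obtain ⟨hp, hq⟩ := ZCut_memD h
  refine ⟨[p, q], by simp, by simp, by simp, ?_, ?_⟩
  · exact List.isChain_cons_cons.2 ⟨h.1, by simp⟩
  · intro x hx
    rcases List.mem_cons.1 hx with h' | h'
    · subst h'; exact hp
    · simp only [List.mem_singleton] at h'; subst h'; exact hq

/-- two pixels each on a cut edge and adjacent to each other are D-connected -/
lemma ZCut_step {p q w u : ℤ × ℤ} (hc1 : ZCut S W p q) (hc2 : ZCut S W w u)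
    (hpw : Zadj p w) : Conn Zadj (Dband S W) p w := by
  have hpD := (ZCut_memD hc1).1
  have hwD := (ZCut_memD hc2).1
  have hp : p ∈ S ∨ p ∈ W := by rcases hc1.2 with ⟨h, -⟩ | ⟨h, -⟩ <;> [exact Or.inl h; exact Or.inr h]
  have hw : w ∈ S ∨ w ∈ W := by rcases hc2.2 with ⟨h, -⟩ | ⟨h, -⟩ <;> [exact Or.inl h; exact Or.inr h]
  -- either it's a cut edge or a same-side edge: in both cases [p, w] works
  refine ⟨[p, w], by simp, by simp, by simp, ?_, ?_⟩
  · exact List.isChain_cons_cons.2 ⟨hpw, by simp⟩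
  · intro x hx
    rcases List.mem_cons.1 hx with h' | h'
    · subst h'; exact hpD
    · simp only [List.mem_singleton] at h'; subst h'; exact hwD

end core

section core2

variable (S W : Set (ℤ × ℤ)) (a : ℤ × ℤ)

def Kcomp : Set (ℤ × ℤ) := {p | Conn Zadj (Dband S W) a p}

def ZcutK (p q : ℤ × ℤ) : Prop := ZCut S W p q ∧ p ∈ Kcomp S W a

variable {S W a}

lemma mem_K_of_conn {p q : ℤ × ℤ} (hp : p ∈ Kcomp S W a)
    (h : Conn Zadj (Dband S W) p q) : q ∈ Kcomp S W a := Conn.trans hp h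

lemma ZcutK_both {p q : ℤ × ℤ} (h : ZcutK S W a p q) :
    p ∈ Kcomp S W a ∧ q ∈ Kcomp S W a :=
  ⟨h.2, mem_K_of_conn h.2 (ZCut_conn h.1)⟩

lemma ZcutK_comm {p q : ℤ × ℤ} : ZcutK S W a p q ↔ ZcutK S W a q p := by
  constructor
  · intro h
    exact ⟨ZCut_symm h.1, (ZcutK_both h).2⟩
  · intro h
    exact ⟨ZCut_symm h.1, (ZcutK_both h).2⟩

lemma ZCut_hasS {p q : ℤ × ℤ} (h : ZCut S W p q) : p ∈ S ∨ q ∈ S := by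
  rcases h.2 with ⟨h1, -⟩ | ⟨-, h2⟩
  · exact Or.inl h1
  · exact Or.inr h2

/-- transfer K-membership between cut edges linked by equality or adjacency -/
lemma Kreach {p' q' v v' : ℤ × ℤ} (hc1 : ZCut S W p' q') (hp' : p' ∈ Kcomp S W a)
    (hc2 : ZCut S W v v')
    (hgeom : p' = v ∨ Zadj p' v ∨ p' = v' ∨ Zadj p' v') : v ∈ Kcomp S W a := by
  rcases hgeom with h | h | h | h
  · exact h ▸ hp'
  · exact mem_K_of_conn hp' (ZCut_step hc1 hc2 h)
  · have hv' : v' ∈ Kcomp S W a := h ▸ hp'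
    exact mem_K_of_conn hv' (Conn.symm Zadj_symm (ZCut_conn hc2))
  · have hv' : v' ∈ Kcomp S W a :=
      mem_K_of_conn hp' (ZCut_step hc1 (ZCut_symm hc2) h)
    exact mem_K_of_conn hv' (Conn.symm Zadj_symm (ZCut_conn hc2))


/-- near an S pixel, a cut edge is exactly a W-XOR edge -/
lemma cut_xor (hdisj : ∀ p ∈ S, p ∉ W)
    (hclo : ∀ w ∈ W, ∀ x : ℤ × ℤ, Zadj w x → x ∉ S →
      (∃ s ∈ S, |x.1 - s.1| ≤ 1 ∧ |x.2 - s.2| ≤ 1) → x ∈ W)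
    {p q : ℤ × ℤ} (hadj : Zadj p q)
    (hnp : ∃ s ∈ S, |p.1 - s.1| ≤ 1 ∧ |p.2 - s.2| ≤ 1)
    (hnq : ∃ s ∈ S, |q.1 - s.1| ≤ 1 ∧ |q.2 - s.2| ≤ 1) :
    pind (ZCut S W p q) = pind (p ∈ W) + pind (q ∈ W) := by
  by_cases hp : p ∈ W <;> by_cases hq : q ∈ W
  · rw [pind_pos hp, pind_pos hq]
    rw [pind_neg]
    · decide
    · rintro ⟨-, ⟨hS, -⟩ | ⟨-, hS⟩⟩
      · exact hdisj p hS hp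
      · exact hdisj q hS hq
  · have hqS : q ∈ S := by
      by_contra hqS
      exact hq (hclo p hp q hadj hqS hnq)
    rw [pind_pos hp, pind_neg hq, pind_pos ⟨hadj, Or.inr ⟨hp, hqS⟩⟩]
    decide
  · have hpS : p ∈ S := by
      by_contra hpS
      exact hp (hclo q hq p (Zadj_symm hadj) hpS hnp)
    rw [pind_neg hp, pind_pos hq, pind_pos ⟨hadj, Or.inl ⟨hpS, hq⟩⟩]
    decide
  · rw [pind_neg hp, pind_neg hq]
    rw [pind_neg]
    · decide
    · rintro ⟨-, ⟨-, hW⟩ | ⟨hW, -⟩⟩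
      · exact hq hW
      · exact hp hW

/-- the corner parity lemma -/
lemma corner_parity (hdisj : ∀ p ∈ S, p ∉ W)
    (hclo : ∀ w ∈ W, ∀ x : ℤ × ℤ, Zadj w x → x ∉ S →
      (∃ s ∈ S, |x.1 - s.1| ≤ 1 ∧ |x.2 - s.2| ≤ 1) → x ∈ W)
    (x y : ℤ) :
    pind (ZcutK S W a (x, y) (x+1, y)) + pind (ZcutK S W a (x, y+1) (x+1, y+1)) +
    pind (ZcutK S W a (x, y) (x, y+1)) + pind (ZcutK S W a (x+1, y) (x+1, y+1)) = 0 := by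
  by_cases hS : (x, y) ∈ S ∨ (x+1, y) ∈ S ∨ (x, y+1) ∈ S ∨ (x+1, y+1) ∈ S
  · -- some corner pixel in S
    have hnear : ∀ z : ℤ × ℤ, (z = (x, y) ∨ z = (x+1, y) ∨ z = (x, y+1) ∨ z = (x+1, y+1)) →
        ∃ s ∈ S, |z.1 - s.1| ≤ 1 ∧ |z.2 - s.2| ≤ 1 := by
      intro z hz
      rcases hS with h | h | h | h <;>
        refine ⟨_, h, ?_⟩ <;>
        rcases hz with rfl | rfl | rfl | rfl <;>
        simp <;> omega
    have hadj_b : Zadj (x, y) (x+1, y) := by simp [Zadj]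
    have hadj_t : Zadj (x, y+1) (x+1, y+1) := by simp [Zadj]
    have hadj_l : Zadj (x, y) (x, y+1) := by simp [Zadj]
    have hadj_r : Zadj (x+1, y) (x+1, y+1) := by simp [Zadj]
    by_cases hK : ZcutK S W a (x, y) (x+1, y) ∨ ZcutK S W a (x, y+1) (x+1, y+1) ∨
        ZcutK S W a (x, y) (x, y+1) ∨ ZcutK S W a (x+1, y) (x+1, y+1)
    · obtain ⟨p', q', hc', hp'K, hp'mem⟩ :
          ∃ p' q', ZCut S W p' q' ∧ p' ∈ Kcomp S W a ∧
          (p' = (x, y) ∨ p' = (x+1, y) ∨ p' = (x, y+1) ∨ p' = (x+1, y+1)) := by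
        rcases hK with h | h | h | h
        · exact ⟨_, _, h.1, h.2, Or.inl rfl⟩
        · exact ⟨_, _, h.1, h.2, Or.inr (Or.inr (Or.inl rfl))⟩
        · exact ⟨_, _, h.1, h.2, Or.inl rfl⟩
        · exact ⟨_, _, h.1, h.2, Or.inr (Or.inl rfl)⟩
      have hgeom : ∀ v v' : ℤ × ℤ,
          (v = (x, y) ∨ v = (x+1, y) ∨ v = (x, y+1) ∨ v = (x+1, y+1)) →
          (v' = (x, y) ∨ v' = (x+1, y) ∨ v' = (x, y+1) ∨ v' = (x+1, y+1)) →
          v ≠ v' →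
          (p' = v ∨ Zadj p' v ∨ p' = v' ∨ Zadj p' v') := by
        intro v v' hv hv' hne
        rcases hp'mem with rfl | rfl | rfl | rfl <;>
          rcases hv with rfl | rfl | rfl | rfl <;>
          rcases hv' with rfl | rfl | rfl | rfl <;>
          simp only [Zadj, Prod.mk.injEq, true_and, and_true, or_true, true_or,
            eq_self_iff_true, ne_eq, not_true, not_false_iff] at hne ⊢ <;>
          try omega
      have hcutKiff : ∀ v v' : ℤ × ℤ,
          (v = (x, y) ∨ v = (x+1, y) ∨ v = (x, y+1) ∨ v = (x+1, y+1)) →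
          (v' = (x, y) ∨ v' = (x+1, y) ∨ v' = (x, y+1) ∨ v' = (x+1, y+1)) →
          v ≠ v' →
          (ZcutK S W a v v' ↔ ZCut S W v v') := by
        intro v v' hv hv' hne
        exact ⟨fun h => h.1, fun h => ⟨h, Kreach hc' hp'K h (hgeom v v' hv hv' hne)⟩⟩
      rw [pind_iff (hcutKiff _ _ (Or.inl rfl) (Or.inr (Or.inl rfl))
            (by intro hcon; rw [Prod.mk.injEq] at hcon; omega)),
        pind_iff (hcutKiff _ _ (Or.inr (Or.inr (Or.inl rfl))) (Or.inr (Or.inr (Or.inr rfl)))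
            (by intro hcon; rw [Prod.mk.injEq] at hcon; omega)),
        pind_iff (hcutKiff _ _ (Or.inl rfl) (Or.inr (Or.inr (Or.inl rfl)))
            (by intro hcon; rw [Prod.mk.injEq] at hcon; omega)),
        pind_iff (hcutKiff _ _ (Or.inr (Or.inl rfl)) (Or.inr (Or.inr (Or.inr rfl)))
            (by intro hcon; rw [Prod.mk.injEq] at hcon; omega))]
      rw [cut_xor hdisj hclo hadj_b (hnear _ (Or.inl rfl)) (hnear _ (Or.inr (Or.inl rfl))),
        cut_xor hdisj hclo hadj_t (hnear _ (Or.inr (Or.inr (Or.inl rfl)))) (hnear _ (Or.inr (Or.inr (Or.inr rfl)))),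
        cut_xor hdisj hclo hadj_l (hnear _ (Or.inl rfl)) (hnear _ (Or.inr (Or.inr (Or.inl rfl)))),
        cut_xor hdisj hclo hadj_r (hnear _ (Or.inr (Or.inl rfl))) (hnear _ (Or.inr (Or.inr (Or.inr rfl))))]
      have hfin : ∀ u v w t : ZMod 2, (u + v) + (w + t) + (u + w) + (v + t) = 0 := by decide
      exact hfin _ _ _ _
    · push_neg at hK
      obtain ⟨h1, h2, h3, h4⟩ := hK
      rw [pind_neg h1, pind_neg h2, pind_neg h3, pind_neg h4]
      decide
  · push_neg at hS
    obtain ⟨h1, h2, h3, h4⟩ := hS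
    rw [pind_neg (fun h => ?_), pind_neg (fun h => ?_), pind_neg (fun h => ?_),
      pind_neg (fun h => ?_)]
    · decide
    · rcases ZCut_hasS h.1 with h' | h' <;> tauto
    · rcases ZCut_hasS h.1 with h' | h' <;> tauto
    · rcases ZCut_hasS h.1 with h' | h' <;> tauto
    · rcases ZCut_hasS h.1 with h' | h' <;> tauto

section potential

variable (S W : Set (ℤ × ℤ)) (a : ℤ × ℤ) (M : ℤ)

noncomputable def fpar (p : ℤ × ℤ) : ZMod 2 :=
  ∑ k ∈ Finset.Icc p.1 M, pind (ZcutK S W a (k, p.2) (k + 1, p.2))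

variable {S W a M}

lemma ZcutK_le {x y x' y' : ℤ} (hSbox : ∀ p ∈ S, 0 ≤ p.1 ∧ p.1 ≤ M ∧ 0 ≤ p.2 ∧ p.2 ≤ M)
    (h : ZcutK S W a (x, y) (x', y')) : x ≤ M ∨ x' ≤ M := by
  rcases ZCut_hasS h.1 with h' | h'
  · exact Or.inl (hSbox _ h').2.1
  · exact Or.inr (hSbox _ h').2.1

lemma fpar_E (hSbox : ∀ p ∈ S, 0 ≤ p.1 ∧ p.1 ≤ M ∧ 0 ≤ p.2 ∧ p.2 ≤ M) (x y : ℤ) :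
    fpar S W a M (x, y) = pind (ZcutK S W a (x, y) (x + 1, y)) + fpar S W a M (x + 1, y) := by
  by_cases hx : x ≤ M
  · have hins : Finset.Icc x M = insert x (Finset.Icc (x + 1) M) := by
      ext k; simp only [Finset.mem_Icc, Finset.mem_insert]; omega
    simp only [fpar]
    rw [hins, Finset.sum_insert (by simp)]
  · simp only [fpar]
    rw [Finset.Icc_eq_empty (by simp; omega), Finset.Icc_eq_empty (by simp; omega)]
    simp only [Finset.sum_empty]
    rw [pind_neg]
    · simp
    · intro h
      rcases ZcutK_le hSbox h with h' | h' <;> omega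

lemma fpar_V (hdisj : ∀ p ∈ S, p ∉ W)
    (hclo : ∀ w ∈ W, ∀ x : ℤ × ℤ, Zadj w x → x ∉ S →
      (∃ s ∈ S, |x.1 - s.1| ≤ 1 ∧ |x.2 - s.2| ≤ 1) → x ∈ W)
    (hSbox : ∀ p ∈ S, 0 ≤ p.1 ∧ p.1 ≤ M ∧ 0 ≤ p.2 ∧ p.2 ≤ M) (x y : ℤ) :
    fpar S W a M (x, y) + fpar S W a M (x, y + 1) = pind (ZcutK S W a (x, y) (x, y + 1)) := by
  suffices h : ∀ n : ℕ, ∀ x : ℤ, (M + 1 - x).toNat ≤ n → ∀ y : ℤ,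
      fpar S W a M (x, y) + fpar S W a M (x, y + 1) =
        pind (ZcutK S W a (x, y) (x, y + 1)) by
    exact h (M + 1 - x).toNat x le_rfl y
  intro n
  induction n with
  | zero =>
    intro x hx y
    have hx' : M < x := by omega
    simp only [fpar]
    rw [Finset.Icc_eq_empty (by simp; omega)]
    simp only [Finset.sum_empty]
    rw [pind_neg]
    · simp
    · intro h
      rcases ZcutK_le hSbox h with h' | h' <;> omega
  | succ n ih =>
    intro x hx y
    by_cases hxM : M < x
    · simp only [fpar]
      rw [Finset.Icc_eq_empty (by simp; omega)]
      simp only [Finset.sum_empty]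
      rw [pind_neg]
      · simp
      · intro h
        rcases ZcutK_le hSbox h with h' | h' <;> omega
    · have h3 := ih (x + 1) (by omega) y
      have h4 := corner_parity (a := a) hdisj hclo x y
      rw [fpar_E hSbox x y, fpar_E hSbox x (y + 1)]
      have hz : ∀ b t l r f1 f2 : ZMod 2, f1 + f2 = r → b + t + l + r = 0 →
          (b + f1) + (t + f2) = l := by decide
      exact hz _ _ _ _ _ _ h3 h4

lemma fpar_step (hdisj : ∀ p ∈ S, p ∉ W)
    (hclo : ∀ w ∈ W, ∀ x : ℤ × ℤ, Zadj w x → x ∉ S →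
      (∃ s ∈ S, |x.1 - s.1| ≤ 1 ∧ |x.2 - s.2| ≤ 1) → x ∈ W)
    (hSbox : ∀ p ∈ S, 0 ≤ p.1 ∧ p.1 ≤ M ∧ 0 ≤ p.2 ∧ p.2 ≤ M)
    {p q : ℤ × ℤ} (h : Zadj p q) :
    fpar S W a M p + fpar S W a M q = pind (ZcutK S W a p q) := by
  have hdbl : ∀ u v : ZMod 2, (u + v) + v = u := by decide
  have hcomm : ∀ u v w : ZMod 2, u + v = w → v + u = w := by decide
  obtain ⟨px, py⟩ := p
  obtain ⟨qx, qy⟩ := q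
  rcases h with ⟨h1, h2 | h2⟩ | ⟨h1, h2 | h2⟩ <;> dsimp only at h1 h2
  · -- py = qy + 1 : q is below p
    subst h1; subst h2
    apply hcomm
    rw [fpar_V hdisj hclo hSbox]
    exact pind_iff ZcutK_comm
  · -- qy = py + 1
    subst h1; subst h2
    exact fpar_V hdisj hclo hSbox px py
  · -- px = qx + 1 : q is left of p
    subst h1; subst h2
    apply hcomm
    rw [fpar_E hSbox]
    rw [hdbl]
    exact pind_iff ZcutK_comm
  · -- qx = px + 1
    subst h1; subst h2
    rw [fpar_E hSbox px py, hdbl]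

lemma fpar_walk (hdisj : ∀ p ∈ S, p ∉ W)
    (hclo : ∀ w ∈ W, ∀ x : ℤ × ℤ, Zadj w x → x ∉ S →
      (∃ s ∈ S, |x.1 - s.1| ≤ 1 ∧ |x.2 - s.2| ≤ 1) → x ∈ W)
    (hSbox : ∀ p ∈ S, 0 ≤ p.1 ∧ p.1 ≤ M ∧ 0 ≤ p.2 ∧ p.2 ≤ M)
    {X : Set (ℤ × ℤ)} (hnc : ∀ p ∈ X, ∀ q ∈ X, Zadj p q → ¬ ZcutK S W a p q) :
    ∀ l : List (ℤ × ℤ), l.Chain' Zadj → (∀ x ∈ l, x ∈ X) → ∀ p q, l.head? = some p →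
      l.getLast? = some q → fpar S W a M p = fpar S W a M q := by
  intro l
  induction l with
  | nil => intro _ _ p q hp; simp at hp
  | cons x t ih =>
    cases t with
    | nil =>
      intro _ _ p q hp hq
      simp only [List.head?_cons, Option.some_inj] at hp
      have : x = q := by simpa using hq
      rw [← hp, ← this]
    | cons y t' =>
      intro hc hX p q hp hq
      simp only [List.head?_cons, Option.some_inj] at hp
      rw [← hp]
      have hadj : Zadj x y := (List.isChain_cons_cons.1 hc).1
      have hstep : fpar S W a M x + fpar S W a M y = 0 := by
        rw [fpar_step hdisj hclo hSbox hadj,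
          pind_neg (hnc x (hX x (by simp)) y (hX y (by simp)) hadj)]
      have heq : fpar S W a M x = fpar S W a M y := by
        have : ∀ u v : ZMod 2, u + v = 0 → u = v := by decide
        exact this _ _ hstep
      rw [heq]
      exact ih (List.isChain_cons_cons.1 hc).2 (fun z hz => hX z (List.mem_cons_of_mem _ hz)) y q
        rfl (by simpa using hq)

/-- MAIN CORE THEOREM: the boundary band is connected -/
theorem Dband_conn {S W : Set (ℤ × ℤ)} {M : ℤ}
    (hdisj : ∀ p ∈ S, p ∉ W)
    (hSbox : ∀ p ∈ S, 0 ≤ p.1 ∧ p.1 ≤ M ∧ 0 ≤ p.2 ∧ p.2 ≤ M)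
    (hSconn : ∀ p ∈ S, ∀ q ∈ S, Conn Zadj S p q)
    (hWconn : ∀ p ∈ W, ∀ q ∈ W, Conn Zadj W p q)
    (hclo : ∀ w ∈ W, ∀ x : ℤ × ℤ, Zadj w x → x ∉ S →
      (∃ s ∈ S, |x.1 - s.1| ≤ 1 ∧ |x.2 - s.2| ≤ 1) → x ∈ W) :
    ∀ a ∈ Dband S W, ∀ b ∈ Dband S W, Conn Zadj (Dband S W) a b := by
  intro a ha b hb
  by_contra hbK
  have haK : a ∈ Kcomp S W a := Conn.refl ha
  obtain ⟨sa, wa, hca, hsaS, hwaW, hsaK⟩ :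
      ∃ s w, ZCut S W s w ∧ s ∈ S ∧ w ∈ W ∧ s ∈ Kcomp S W a := by
    rcases ha with ⟨haS, q, hqW, hadj⟩ | ⟨haW, q, hqS, hadj⟩
    · exact ⟨a, q, ⟨hadj, Or.inl ⟨haS, hqW⟩⟩, haS, hqW, haK⟩
    · have hc : ZCut S W q a := ⟨Zadj_symm hadj, Or.inl ⟨hqS, haW⟩⟩
      exact ⟨q, a, hc, hqS, haW, mem_K_of_conn haK (Conn.symm Zadj_symm (ZCut_conn hc))⟩
  obtain ⟨sb, wb, hcb, hsbS, hwbW, hsbK⟩ :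
      ∃ s w, ZCut S W s w ∧ s ∈ S ∧ w ∈ W ∧ s ∉ Kcomp S W a := by
    rcases hb with ⟨hbS, q, hqW, hadj⟩ | ⟨hbW, q, hqS, hadj⟩
    · exact ⟨b, q, ⟨hadj, Or.inl ⟨hbS, hqW⟩⟩, hbS, hqW, hbK⟩
    · have hc : ZCut S W q b := ⟨Zadj_symm hadj, Or.inl ⟨hqS, hbW⟩⟩
      refine ⟨q, b, hc, hqS, hbW, fun h => hbK (mem_K_of_conn h (ZCut_conn hc))⟩
  -- walk in S between sa and sb
  have h1 : fpar S W a M sa = fpar S W a M sb := by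
    obtain ⟨l, h1', h2', h3', h4', h5'⟩ := hSconn sa hsaS sb hsbS
    refine fpar_walk hdisj hclo hSbox ?_ l h4' h5' sa sb h2' h3'
    intro p hp q hq hadj hcut
    rcases hcut.1.2 with ⟨-, hqW⟩ | ⟨hpW, -⟩
    · exact hdisj q hq hqW
    · exact hdisj p hp hpW
  have h2 : fpar S W a M wa = fpar S W a M wb := by
    obtain ⟨l, h1', h2', h3', h4', h5'⟩ := hWconn wa hwaW wb hwbW
    refine fpar_walk hdisj hclo hSbox ?_ l h4' h5' wa wb h2' h3'
    intro p hp q hq hadj hcut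
    rcases hcut.1.2 with ⟨hpS, -⟩ | ⟨-, hqS⟩
    · exact hdisj p hpS hp
    · exact hdisj q hqS hq
  have h3 : fpar S W a M sb + fpar S W a M wb = 0 := by
    rw [fpar_step hdisj hclo hSbox hcb.1, pind_neg (fun h => hsbK h.2)]
  have h4 : fpar S W a M sa + fpar S W a M wa = 1 := by
    rw [fpar_step hdisj hclo hSbox hca.1, pind_pos ⟨hca, hsaK⟩]
  rw [h1, h2, h3] at h4
  exact one_ne_zero h4.symm

end potential
end core2



-- ===== grid lemmas =====
section grid
variable {n : ℕ}

lemma Nbr_symm : Symmetric (@Nbr n) := by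
  intro p q h
  rcases h with ⟨h1, h2⟩ | ⟨h1, h2⟩
  · exact Or.inl ⟨h1.symm, h2.symm⟩
  · exact Or.inr ⟨h1.symm, h2.symm⟩

variable {I : Fin n → Fin n → Bool}

lemma mem_shapeOf_iff {P Q : Fin n × Fin n} :
    Q ∈ shapeOf I P ↔ Conn Nbr {R : Fin n × Fin n | I R.1 R.2 = I P.1 P.2} P Q := by
  constructor
  · rintro ⟨l, ⟨h1, h2, h3, h4⟩, h5⟩; exact ⟨l, h1, h2, h3, h4, h5⟩
  · rintro ⟨l, h1, h2, h3, h4, h5⟩; exact ⟨l, ⟨h1, h2, h3, h4⟩, h5⟩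

lemma mem_shapeOf_self {P : Fin n × Fin n} : P ∈ shapeOf I P :=
  mem_shapeOf_iff.2 (Conn.refl rfl)

lemma color_of_mem_shapeOf {P Q : Fin n × Fin n} (h : Q ∈ shapeOf I P) :
    I Q.1 Q.2 = I P.1 P.2 :=
  (mem_shapeOf_iff.1 h).mem_right

lemma shapeOf_eq_of_mem {P Q : Fin n × Fin n} (h : Q ∈ shapeOf I P) :
    shapeOf I Q = shapeOf I P := by
  have hc := color_of_mem_shapeOf h
  have hset : {R : Fin n × Fin n | I R.1 R.2 = I Q.1 Q.2} =
      {R : Fin n × Fin n | I R.1 R.2 = I P.1 P.2} := by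
    ext R; simp [hc]
  ext R
  rw [mem_shapeOf_iff, mem_shapeOf_iff, hset]
  constructor
  · intro h'
    exact Conn.trans (mem_shapeOf_iff.1 h) h'
  · intro h'
    exact Conn.trans (Conn.symm Nbr_symm (mem_shapeOf_iff.1 h)) h'

/-- members of a shape are connected inside the shape -/
lemma conn_in_shapeOf {P Q : Fin n × Fin n} (h : Q ∈ shapeOf I P) :
    Conn Nbr (shapeOf I P) P Q := by
  obtain ⟨l, h1, h2, h3, h4, h5⟩ := mem_shapeOf_iff.1 h
  refine ⟨l, h1, h2, h3, h4, ?_⟩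
  intro z hz
  exact mem_shapeOf_iff.2 (conn_all_of_walk l h4 h5 P h2 z hz)

end grid

section gridW
variable {n : ℕ} (hn : 0 < n) (S : Set (Fin n × Fin n))

/-- the set of pixels reachable from the origin avoiding S -/
def gridW : Set (Fin n × Fin n) :=
  {R | Conn Nbr {x : Fin n × Fin n | x ∉ S} (origin hn) R}

variable {hn S}

lemma gridW_not_S {R : Fin n × Fin n} (h : R ∈ gridW hn S) : R ∉ S := h.mem_right

lemma gridW_conn {u : Fin n × Fin n} (hu : u ∈ gridW hn S) :
    Conn Nbr (gridW hn S) (origin hn) u := by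
  obtain ⟨l, h1, h2, h3, h4, h5⟩ := hu
  exact ⟨l, h1, h2, h3, h4, fun z hz => conn_all_of_walk l h4 h5 _ h2 z hz⟩

lemma gridW_conn_pair {u v : Fin n × Fin n} (hu : u ∈ gridW hn S) (hv : v ∈ gridW hn S) :
    Conn Nbr (gridW hn S) u v :=
  Conn.trans (Conn.symm Nbr_symm (gridW_conn hu)) (gridW_conn hv)

lemma gridW_snoc {u v : Fin n × Fin n} (hu : u ∈ gridW hn S) (huv : Nbr u v) (hv : v ∉ S) :
    v ∈ gridW hn S :=
  Conn.snoc hu huv hv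

end gridW

section rim
variable {n : ℕ} (hn : 0 < n)

def rim (n : ℕ) : Set (Fin n × Fin n) :=
  {p | p.1.val = 0 ∨ p.1.val = n - 1 ∨ p.2.val = 0 ∨ p.2.val = n - 1}

variable {Y : Set (Fin n × Fin n)}

lemma conn_row (i : Fin n) (hY : ∀ k : Fin n, (i, k) ∈ Y) (j : Fin n) :
    Conn Nbr Y (i, (⟨0, hn⟩ : Fin n)) (i, j) := by
  suffices h : ∀ m : ℕ, ∀ j : Fin n, j.val = m → Conn Nbr Y (i, (⟨0, hn⟩ : Fin n)) (i, j) by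
    exact h j.val j rfl
  intro m
  induction m with
  | zero =>
    intro j hj
    have : j = ⟨0, hn⟩ := Fin.ext hj
    subst this
    exact Conn.refl (hY _)
  | succ m ih =>
    intro j hj
    have hm : m < n := by omega
    have h1 := ih ⟨m, hm⟩ rfl
    refine Conn.snoc h1 ?_ (hY _)
    exact Or.inl ⟨rfl, Or.inl (by simp [hj])⟩

lemma conn_col (j : Fin n) (hY : ∀ k : Fin n, (k, j) ∈ Y) (i : Fin n) :
    Conn Nbr Y ((⟨0, hn⟩ : Fin n), j) (i, j) := by
  suffices h : ∀ m : ℕ, ∀ i : Fin n, i.val = m → Conn Nbr Y ((⟨0, hn⟩ : Fin n), j) (i, j) by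
    exact h i.val i rfl
  intro m
  induction m with
  | zero =>
    intro i hi
    have : i = ⟨0, hn⟩ := Fin.ext hi
    subst this
    exact Conn.refl (hY _)
  | succ m ih =>
    intro i hi
    have hm : m < n := by omega
    have h1 := ih ⟨m, hm⟩ rfl
    refine Conn.snoc h1 ?_ (hY _)
    exact Or.inr ⟨rfl, Or.inl (by simp [hi])⟩

lemma rim_conn {z : Fin n × Fin n} (hz : z ∈ rim n) :
    Conn Nbr (rim n) (origin hn) z := by
  obtain ⟨i, j⟩ := z
  have hcol0 : ∀ k : Fin n, ((k, (⟨0, hn⟩ : Fin n)) : Fin n × Fin n) ∈ rim n := by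
    intro k; exact Or.inr (Or.inr (Or.inl rfl))
  have hrow0 : ∀ k : Fin n, (((⟨0, hn⟩ : Fin n), k) : Fin n × Fin n) ∈ rim n := by
    intro k; exact Or.inl rfl
  rcases hz with h | h | h | h
  · -- i.val = 0
    have : i = ⟨0, hn⟩ := Fin.ext h
    subst this
    exact conn_row hn _ (fun k => Or.inl rfl) j
  · -- i.val = n - 1
    have hrowi : ∀ k : Fin n, ((i, k) : Fin n × Fin n) ∈ rim n := by
      intro k; exact Or.inr (Or.inl h)
    exact Conn.trans (conn_col hn _ hcol0 i) (conn_row hn _ hrowi j)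
  · -- j.val = 0
    have : j = ⟨0, hn⟩ := Fin.ext h
    subst this
    exact conn_col hn _ hcol0 i
  · -- j.val = n - 1
    have hcolj : ∀ k : Fin n, ((k, j) : Fin n × Fin n) ∈ rim n := by
      intro k; exact Or.inr (Or.inr (Or.inr h))
    exact Conn.trans (conn_row hn _ hrow0 j) (conn_col hn _ hcolj i)

end rim

section image
variable {n : ℕ} (hn : 0 < n) (I : Fin n → Fin n → Bool) (P₀ : Fin n × Fin n)

def WhiteBorder (I : Fin n → Fin n → Bool) : Prop :=
  ∀ i j : Fin n, (i.val = 0 ∨ i.val = n - 1 ∨ j.val = 0 ∨ j.val = n - 1) → I i j = false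

variable {hn I P₀}

lemma origin_white (hwhite : WhiteBorder I) : I (origin hn).1 (origin hn).2 = false :=
  hwhite _ _ (Or.inl rfl)

lemma rim_sub_shape_origin (hwhite : WhiteBorder I) {z : Fin n × Fin n} (hz : z ∈ rim n) :
    z ∈ shapeOf I (origin hn) := by
  rw [mem_shapeOf_iff]
  refine Conn.mono ?_ (rim_conn hn hz)
  intro p hp
  simp only [Set.mem_setOf_eq]
  rw [origin_white (hn := hn) hwhite]
  exact hwhite p.1 p.2 hp

lemma origin_not_mem_S (hne : shapeOf I P₀ ≠ shapeOf I (origin hn)) :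
    origin hn ∉ shapeOf I P₀ := by
  intro h
  exact hne (shapeOf_eq_of_mem h).symm

lemma rim_not_mem_S (hwhite : WhiteBorder I) (hne : shapeOf I P₀ ≠ shapeOf I (origin hn))
    {z : Fin n × Fin n} (hz : z ∈ rim n) : z ∉ shapeOf I P₀ := by
  intro h
  have h1 := shapeOf_eq_of_mem h
  have h2 := shapeOf_eq_of_mem (rim_sub_shape_origin (hn := hn) hwhite hz)
  exact hne (h1 ▸ h2)

lemma rim_sub_gridW (hwhite : WhiteBorder I) (hne : shapeOf I P₀ ≠ shapeOf I (origin hn))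
    {z : Fin n × Fin n} (hz : z ∈ rim n) : z ∈ gridW hn (shapeOf I P₀) := by
  refine Conn.mono ?_ (rim_conn hn hz)
  intro p hp
  exact rim_not_mem_S hwhite hne hp

/-- pixels of the shape avoid the rim -/
lemma S_interior (hwhite : WhiteBorder I) (hne : shapeOf I P₀ ≠ shapeOf I (origin hn))
    {s : Fin n × Fin n} (hs : s ∈ shapeOf I P₀) :
    s.1.val ≠ 0 ∧ s.1.val ≠ n - 1 ∧ s.2.val ≠ 0 ∧ s.2.val ≠ n - 1 := by
  have h := rim_not_mem_S (P₀ := P₀) hwhite hne (z := s)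
  by_contra hc
  push_neg at hc
  apply h _ hs
  by_cases h1 : s.1.val = 0
  · exact Or.inl h1
  by_cases h2 : s.1.val = n - 1
  · exact Or.inr (Or.inl h2)
  by_cases h3 : s.2.val = 0
  · exact Or.inr (Or.inr (Or.inl h3))
  · exact Or.inr (Or.inr (Or.inr (by tauto)))

/-- characterization of the outer boundary -/
lemma outerBdry_char (hne : shapeOf I P₀ ≠ shapeOf I (origin hn)) :
    outerBdry hn (shapeOf I P₀) =
      {Q | Q ∈ shapeOf I P₀ ∧ ∃ R ∈ gridW hn (shapeOf I P₀), Nbr R Q} := by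
  ext Q
  constructor
  · rintro ⟨hQS, l, ⟨h1, h2, h3, h4⟩, h5⟩
    refine ⟨hQS, ?_⟩
    obtain ⟨x, hx1, hx2⟩ := exists_before_first l h4 _ h2 Q h3 h5
      (origin_not_mem_S hne) hQS
    exact ⟨x, hx1, hx2⟩
  · rintro ⟨hQS, R, hR, hRQ⟩
    refine ⟨hQS, ?_⟩
    obtain ⟨l, h1, h2, h3, h4, h5⟩ := hR
    refine ⟨l ++ [Q], ⟨by simp, ?_, ?_, ?_⟩, ?_⟩
    · rw [List.head?_append_of_ne_nil _ h1]; exact h2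
    · exact List.getLast?_concat
    · dsimp only [List.Chain']; rw [List.isChain_append]
      refine ⟨h4, by simp, ?_⟩
      intro u hu v hv
      rw [h3] at hu
      simp only [Option.mem_def, Option.some_inj, List.head?_cons] at hu hv
      subst hu; subst hv
      exact hRQ
    · intro z hz hzS
      rcases List.mem_append.1 hz with h | h
      · exact absurd hzS (h5 z h)
      · simpa using h
end image

-- ===== transfer to ℤ² =====
section transfer
variable {n : ℕ}

def emb (p : Fin n × Fin n) : ℤ × ℤ := ((p.1 : ℤ), (p.2 : ℤ))

lemma emb_inj : Function.Injective (emb (n := n)) := by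
  intro p q h
  simp only [emb, Prod.mk.injEq] at h
  ext
  · exact_mod_cast h.1
  · exact_mod_cast h.2

lemma nbr_iff_zadj {p q : Fin n × Fin n} : Nbr p q ↔ Zadj (emb p) (emb q) := by
  simp only [Nbr, Zadj, emb, Fin.ext_iff]
  omega

lemma conn_push {X : Set (Fin n × Fin n)} {a b : Fin n × Fin n} (h : Conn Nbr X a b) :
    Conn Zadj (emb '' X) (emb a) (emb b) := by
  obtain ⟨l, h1, h2, h3, h4, h5⟩ := h
  refine ⟨l.map emb, by simpa, ?_, ?_, ?_, ?_⟩
  · rw [List.head?_map, h2]; rfl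
  · rw [List.getLast?_map, h3]; rfl
  · dsimp only [List.Chain']; rw [List.isChain_map]
    exact List.IsChain.imp (fun a b h => nbr_iff_zadj.1 h) h4
  · intro z hz
    obtain ⟨y, hy, rfl⟩ := List.mem_map.1 hz
    exact ⟨y, h5 y hy, rfl⟩

lemma conn_pull {X : Set (Fin n × Fin n)} :
    ∀ l : List (ℤ × ℤ), l.Chain' Zadj → (∀ z ∈ l, z ∈ emb '' X) →
      ∀ a b : Fin n × Fin n, l.head? = some (emb a) → l.getLast? = some (emb b) →
      Conn Nbr X a b := by
  intro l
  induction l with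
  | nil => intro _ _ a b ha; simp at ha
  | cons x t ih =>
    intro hc hX a b ha hb
    simp only [List.head?_cons, Option.some_inj] at ha
    subst ha
    have haX : a ∈ X := by
      obtain ⟨y, hy, hye⟩ := hX (emb a) (by simp)
      rw [← emb_inj hye]
      exact hy
    cases t with
    | nil =>
      have : emb a = emb b := by simpa using hb
      rw [← emb_inj this]
      exact Conn.refl haX
    | cons y t' =>
      obtain ⟨c, hcX, hce⟩ := hX y (by simp)
      have hadj : Nbr a c := by
        rw [nbr_iff_zadj, hce]
        exact (List.isChain_cons_cons.1 hc).1
      have hrest := ih (List.isChain_cons_cons.1 hc).2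
        (fun z hz => hX z (List.mem_cons_of_mem _ hz)) c b
        (by rw [← hce]; rfl) (by simpa using hb)
      refine Conn.trans ?_ hrest
      refine ⟨[a, c], by simp, by simp, by simp, ?_, ?_⟩
      · exact List.isChain_cons_cons.2 ⟨hadj, by simp⟩
      · intro z hz
        simp only [List.mem_cons, List.not_mem_nil, or_false] at hz
        rcases hz with rfl | rfl
        · exact haX
        · exact hcX
end transfer

-- ===== counting =====
section count
variable {n : ℕ}

open Classical in
lemma Tcount (S' W' : Set (Fin n × Fin n)) :
    {p | p ∈ W' ∧ ∃ q ∈ S', Nbr p q}.ncard ≤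
      4 * {q | q ∈ S' ∧ ∃ R ∈ W', Nbr R q}.ncard := by
  classical
  set T : Set (Fin n × Fin n) := {p | p ∈ W' ∧ ∃ q ∈ S', Nbr p q} with hT
  set B : Set (Fin n × Fin n) := {q | q ∈ S' ∧ ∃ R ∈ W', Nbr R q} with hB
  have hTf : T.Finite := Set.toFinite T
  have hBf : B.Finite := Set.toFinite B
  rw [Set.ncard_eq_toFinset_card T hTf, Set.ncard_eq_toFinset_card B hBf]
  set Bf := hBf.toFinset
  have hsub : hTf.toFinset ⊆ Bf.biUnion (fun b => Finset.univ.filter (fun p => Nbr p b)) := by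
    intro t ht
    rw [Set.Finite.mem_toFinset] at ht
    obtain ⟨htW, q, hqS, hNbr⟩ := ht
    rw [Finset.mem_biUnion]
    refine ⟨q, ?_, ?_⟩
    · rw [Set.Finite.mem_toFinset]
      exact ⟨hqS, t, htW, hNbr⟩
    · simp [hNbr]
  have hfil : ∀ b : Fin n × Fin n, (Finset.univ.filter (fun p => Nbr p b)).card ≤ 4 := by
    intro b
    have : ((Finset.univ : Finset (Fin 4))).card = 4 := by simp
    rw [← this]
    apply Finset.card_le_card_of_injOn
      (fun p => if p.1.val + 1 = b.1.val then (0 : Fin 4)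
        else if b.1.val + 1 = p.1.val then 1
        else if p.2.val + 1 = b.2.val then 2 else 3)
    · intro p _; simp
    · intro p hp p' hp' hcode
      simp only [Finset.coe_filter, Set.mem_setOf_eq, Finset.mem_univ, true_and] at hp hp'
      simp only [Nbr, Fin.ext_iff] at hp hp'
      have hpq : p.1.val = p'.1.val ∧ p.2.val = p'.2.val := by
        dsimp only at hcode
        split_ifs at hcode <;> first | (exact absurd hcode (by decide)) | omega
      exact Prod.ext (Fin.ext hpq.1) (Fin.ext hpq.2)
  calc hTf.toFinset.card ≤ (Bf.biUnion (fun b => Finset.univ.filter (fun p => Nbr p b))).card :=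
        Finset.card_le_card hsub
    _ ≤ ∑ b ∈ Bf, (Finset.univ.filter (fun p => Nbr p b)).card := Finset.card_biUnion_le
    _ ≤ ∑ _b ∈ Bf, 4 := Finset.sum_le_sum (fun b _ => hfil b)
    _ = 4 * Bf.card := by rw [Finset.sum_const, smul_eq_mul, mul_comm]
end count


/-- There is an absolute constant `C > 0` such that for every image with all-white border
and every shape `S ≠ S⁰` with nonempty outer boundary, there is a path of length at most
`C·|B(S)|` (repetitions allowed) containing every pixel of `B(S)`. -/
theorem stmt15 :
    ∃ C : ℕ, 0 < C ∧ ∀ n : ℕ, ∀ hn : 0 < n, ∀ I : Fin n → Fin n → Bool,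
      (∀ i j : Fin n,
        (i.val = 0 ∨ i.val = n - 1 ∨ j.val = 0 ∨ j.val = n - 1) → I i j = false) →
      ∀ P₀ : Fin n × Fin n, shapeOf I P₀ ≠ shapeOf I (origin hn) →
      (outerBdry hn (shapeOf I P₀)).Nonempty →
      ∃ l : List (Fin n × Fin n), l.Chain' Nbr ∧
        l.length ≤ C * (outerBdry hn (shapeOf I P₀)).ncard ∧
        ∀ Q ∈ outerBdry hn (shapeOf I P₀), Q ∈ l := by
  refine ⟨10, by norm_num, ?_⟩
  intro n hn I hwhite P₀ hne hBne
  set S := shapeOf I P₀ with hS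
  set WA := gridW hn S with hWA
  set Bset : Set (Fin n × Fin n) := {Q | Q ∈ S ∧ ∃ R ∈ WA, Nbr R Q} with hBset
  set Tset : Set (Fin n × Fin n) := {p | p ∈ WA ∧ ∃ q ∈ S, Nbr p q} with hTset
  have hBchar : outerBdry hn S = Bset := outerBdry_char hne
  set Dg : Set (Fin n × Fin n) := Bset ∪ Tset with hDg
  have hconnD : ∀ a ∈ Dg, ∀ b ∈ Dg, Conn Nbr Dg a b := by
    intro a ha b hb
    set SZ := emb '' S with hSZ
    set WZ := emb '' WA with hWZ
    have hdisjZ : ∀ p ∈ SZ, p ∉ WZ := by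
      rintro p ⟨s, hs, rfl⟩ ⟨w, hw, hew⟩
      have hws : w = s := emb_inj hew
      subst hws
      exact (gridW_not_S hw) hs
    have hSboxZ : ∀ p ∈ SZ, 0 ≤ p.1 ∧ p.1 ≤ (n:ℤ) - 1 ∧ 0 ≤ p.2 ∧ p.2 ≤ (n:ℤ) - 1 := by
      rintro p ⟨s, hs, rfl⟩
      have h1 := s.1.isLt
      have h2 := s.2.isLt
      simp only [emb]
      omega
    have hSconnZ : ∀ p ∈ SZ, ∀ q ∈ SZ, Conn Zadj SZ p q := by
      rintro p ⟨s, hs, rfl⟩ q ⟨s', hs', rfl⟩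
      exact conn_push (Conn.trans (Conn.symm Nbr_symm (conn_in_shapeOf hs))
        (conn_in_shapeOf hs'))
    have hWconnZ : ∀ p ∈ WZ, ∀ q ∈ WZ, Conn Zadj WZ p q := by
      rintro p ⟨w, hw, rfl⟩ q ⟨w', hw', rfl⟩
      exact conn_push (gridW_conn_pair hw hw')
    have hcloZ : ∀ w ∈ WZ, ∀ x : ℤ × ℤ, Zadj w x → x ∉ SZ →
        (∃ s ∈ SZ, |x.1 - s.1| ≤ 1 ∧ |x.2 - s.2| ≤ 1) → x ∈ WZ := by
      rintro w ⟨w', hw', rfl⟩ x hadj hxS ⟨s0, ⟨s, hs, rfl⟩, hd1, hd2⟩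
      rw [abs_le] at hd1 hd2
      obtain ⟨hi1, hi2, hi3, hi4⟩ := S_interior hwhite hne hs
      have hb1 := s.1.isLt
      have hb2 := s.2.isLt
      simp only [emb] at hd1 hd2
      have hx1 : 0 ≤ x.1 ∧ x.1 < (n:ℤ) := by omega
      have hx2 : 0 ≤ x.2 ∧ x.2 < (n:ℤ) := by omega
      set x' : Fin n × Fin n := (⟨x.1.toNat, by omega⟩, ⟨x.2.toNat, by omega⟩) with hx'
      have hembx : emb x' = x := by
        simp only [emb, hx']
        exact Prod.ext (by simp; omega) (by simp; omega)
      have hNbr : Nbr w' x' := by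
        rw [nbr_iff_zadj, hembx]
        exact hadj
      have hx'S : x' ∉ S := fun h => hxS ⟨x', h, hembx⟩
      exact ⟨x', gridW_snoc hw' hNbr hx'S, hembx⟩
    have hDb := Dband_conn (M := (n:ℤ) - 1) hdisjZ hSboxZ hSconnZ hWconnZ hcloZ
    have himg : Dband SZ WZ = emb '' Dg := by
      ext z
      constructor
      · rintro (⟨⟨s, hs, rfl⟩, q, ⟨w, hw, rfl⟩, hadj⟩ | ⟨⟨w, hw, rfl⟩, q, ⟨s, hs, rfl⟩, hadj⟩)
        · exact ⟨s, Or.inl ⟨hs, w, hw, Nbr_symm (nbr_iff_zadj.2 hadj)⟩, rfl⟩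
        · exact ⟨w, Or.inr ⟨hw, s, hs, nbr_iff_zadj.2 hadj⟩, rfl⟩
      · rintro ⟨d, hd, rfl⟩
        rcases hd with ⟨hdS, R, hR, hNbr⟩ | ⟨hdW, q, hq, hNbr⟩
        · exact Or.inl ⟨⟨d, hdS, rfl⟩, emb R, ⟨R, hR, rfl⟩, nbr_iff_zadj.1 (Nbr_symm hNbr)⟩
        · exact Or.inr ⟨⟨d, hdW, rfl⟩, emb q, ⟨q, hq, rfl⟩, nbr_iff_zadj.1 hNbr⟩
    have hmem : ∀ c ∈ Dg, emb c ∈ Dband SZ WZ := by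
      intro c hc
      rw [himg]
      exact ⟨c, hc, rfl⟩
    have hc := hDb (emb a) (hmem a ha) (emb b) (hmem b hb)
    rw [himg] at hc
    obtain ⟨l, h1, h2, h3, h4, h5⟩ := hc
    exact conn_pull l h4 h5 a b h2 h3
  have hDfin : Dg.Finite := Set.toFinite _
  have hDne : Dg.Nonempty := by
    obtain ⟨Q, hQ⟩ := hBne
    exact ⟨Q, Or.inl (hBchar ▸ hQ)⟩
  obtain ⟨l, hlc, hlcov, hllen⟩ := exists_cover_walk Nbr_symm Dg hDfin hDne hconnD
  refine ⟨l, hlc, ?_, ?_⟩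
  · have h1 : Dg.ncard ≤ Bset.ncard + Tset.ncard := Set.ncard_union_le _ _
    have h2 : Tset.ncard ≤ 4 * Bset.ncard := Tcount S WA
    rw [hBchar]
    omega
  · intro Q hQ
    exact hlcov Q (Or.inl (hBchar ▸ hQ))
end
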